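/- arXiv:2011.08791 — 8 statements merged into one kernel-verified Lean document; each statement's English description precedes it below -/
import Mathlib

section
/- For any nonnegative integers d and r ≥ 1, the complete homogeneous symmetric polynomial of degree d in r variables satisfies: h_d(x_1+1, ..., x_r+1) = ∑_{i=0}^{d} C(d+r-1, d-i) * h_i(x_1, ..., x_r). -/
/-!
Write `h_d(x + 1) = ∑_{|c| = d} ∏ (x_i + 1)^{c_i}`, expand each factor binomially and exchange
the sums. The coefficient of `x^e` becomes `∑_{|c| = d} ∏ C(c_i, e_i)`, which the upper
Vandermonde identity `∑_{a+b=n} C(a, p) C(b, q) = C(n + 1, p + q + 1)`, iterated over the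
coordinates, evaluates to `C(d + r - 1, |e| + r - 1) = C(d + r - 1, d - |e|)`; it vanishes for
`|e| > d`.
-/

open Finset Finset.Nat

def hsym (r d : ℕ) (x : Fin r → ℚ) : ℚ :=
  ∑ c ∈ (Fintype.piFinset fun _ : Fin r => Finset.range (d + 1)).filter
      (fun c => ∑ i, c i = d), ∏ i, x i ^ c i

theorem filter_piFinset_range_sum_eq_antidiagonalTuple {r d N : ℕ} (h : d ≤ N) :
    (Fintype.piFinset fun _ : Fin r => range (N + 1)).filter (fun c => ∑ i, c i = d)
      = antidiagonalTuple r d := by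
  ext c
  simp only [mem_filter, Fintype.mem_piFinset, mem_range, mem_antidiagonalTuple]
  refine ⟨And.right, fun hc => ⟨fun i => ?_, hc⟩⟩
  have := hc ▸ single_le_sum (fun j _ => Nat.zero_le (c j)) (mem_univ i)
  omega

theorem hsym_eq_sum_antidiagonalTuple (r d : ℕ) (x : Fin r → ℚ) :
    hsym r d x = ∑ c ∈ antidiagonalTuple r d, ∏ i, x i ^ c i := by
  rw [hsym, filter_piFinset_range_sum_eq_antidiagonalTuple le_rfl]

theorem Finset.Nat.sum_antidiagonalTuple_succ {M : Type*} [AddCommMonoid M] (k n : ℕ)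
    (f : (Fin (k + 1) → ℕ) → M) :
    ∑ c ∈ antidiagonalTuple (k + 1) n, f c
      = ∑ ab ∈ antidiagonal n, ∑ c ∈ antidiagonalTuple k ab.2, f (Fin.cons ab.1 c) := by
  rw [sum_sigma']
  refine sum_nbij' (fun c => ⟨(c 0, ∑ i, Fin.tail c i), Fin.tail c⟩)
    (fun p => Fin.cons p.1.1 p.2) ?_ ?_ ?_ ?_ ?_
  · intro c hc
    simp_all [mem_antidiagonalTuple, Fin.sum_univ_succ, Fin.tail]
  · rintro ⟨⟨a, b⟩, c⟩ hp
    simp_all [mem_antidiagonalTuple, Fin.sum_univ_succ]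
  · intro c _
    exact Fin.cons_self_tail c
  · rintro ⟨⟨a, b⟩, c⟩ hp
    simp_all [mem_antidiagonalTuple]
  · intro c _
    rw [Fin.cons_self_tail]

theorem Nat.sum_antidiagonal_choose_mul_choose_add (r q : ℕ) : ∀ n p : ℕ,
    ∑ ab ∈ antidiagonal n, ab.1.choose p * (ab.2 + r).choose (q + r)
      = (n + r + 1).choose (p + q + r + 1)
  | 0, p => by
    rcases p.eq_zero_or_pos with rfl | hp
    · rcases q.eq_zero_or_pos with rfl | hq
      · simp
      · simp [Nat.choose_eq_zero_of_lt, hq]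
    · simp [Nat.choose_eq_zero_of_lt hp,
        Nat.choose_eq_zero_of_lt (by omega : r + 1 < p + q + r + 1)]
  | n + 1, 0 => by
    have ih := Nat.sum_antidiagonal_choose_mul_choose_add r q n 0
    simp only [Nat.choose_zero_right, one_mul, zero_add] at ih ⊢
    rw [sum_antidiagonal_succ, ih, Nat.choose_succ_succ' (n + 1 + r)]
    ring_nf
  | n + 1, p + 1 => by
    simp only [sum_antidiagonal_succ, Nat.choose_zero_succ, zero_mul, zero_add,
      Nat.choose_succ_succ', add_mul, sum_add_distrib]
    rw [Nat.sum_antidiagonal_choose_mul_choose_add r q n p,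
      Nat.sum_antidiagonal_choose_mul_choose_add r q n (p + 1)]
    ring_nf

theorem Finset.Nat.sum_antidiagonalTuple_prod_choose : ∀ (r n : ℕ) (e : Fin (r + 1) → ℕ),
    ∑ c ∈ antidiagonalTuple (r + 1) n, ∏ i, (c i).choose (e i)
      = (n + r).choose (∑ i, e i + r)
  | 0, n, e => by simp [antidiagonalTuple_one]
  | r + 1, n, e => by
    rw [sum_antidiagonalTuple_succ]
    simp only [Fin.prod_univ_succ (n := r + 1), Fin.cons_zero, Fin.cons_succ, ← mul_sum]
    simp only [sum_antidiagonalTuple_prod_choose r, Fin.sum_univ_succ (f := e)]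
    rw [Nat.sum_antidiagonal_choose_mul_choose_add]
    simp only [← add_assoc]

theorem add_one_pow_eq_sum_range_choose {R : Type*} [CommSemiring R] (x : R) {a N : ℕ}
    (h : a ≤ N) : (x + 1) ^ a = ∑ j ∈ range (N + 1), (a.choose j : R) * x ^ j := by
  rw [add_pow]
  refine sum_subset (range_subset_range.2 (by omega)) (fun j _ hj => ?_) |>.trans
    (sum_congr rfl fun j _ => by ring)
  rw [mem_range, not_lt] at hj
  simp [Nat.choose_eq_zero_of_lt (by omega : a < j)]

theorem hsym_add_one (r d : ℕ) (x : Fin (r + 1) → ℚ) :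
    hsym (r + 1) d (fun i => x i + 1)
      = ∑ i ∈ range (d + 1), ((d + r).choose (d - i) : ℚ) * hsym (r + 1) i x := by
  set B := Fintype.piFinset fun _ : Fin (r + 1) => range (d + 1)
  calc hsym (r + 1) d (fun i => x i + 1)
      = ∑ c ∈ antidiagonalTuple (r + 1) d, ∑ e ∈ B,
          ∏ i, ((c i).choose (e i) : ℚ) * x i ^ e i := by
        rw [hsym_eq_sum_antidiagonalTuple]
        refine sum_congr rfl fun c hc => ?_
        rw [mem_antidiagonalTuple] at hc
        have hcd (i) : c i ≤ d := hc ▸ single_le_sum (fun j _ => Nat.zero_le (c j)) (mem_univ i)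
        rw [prod_congr rfl fun i _ => add_one_pow_eq_sum_range_choose (x i) (hcd i)]
        exact prod_univ_sum _ _
    _ = ∑ e ∈ B, ((d + r).choose (∑ i, e i + r) : ℚ) * ∏ i, x i ^ e i := by
        rw [sum_comm]
        refine sum_congr rfl fun e _ => ?_
        simp only [prod_mul_distrib, ← sum_mul]
        rw [← sum_antidiagonalTuple_prod_choose]
        exact_mod_cast rfl
    _ = ∑ i ∈ range (d + 1), ∑ e ∈ B with ∑ j, e j = i,
          ((d + r).choose (∑ i, e i + r) : ℚ) * ∏ i, x i ^ e i := by
        rw [sum_fiberwise_eq_sum_filter, sum_filter_of_ne]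
        intro e _ he
        rw [mem_range, Nat.lt_succ_iff]
        by_contra! h
        exact he (by rw [Nat.choose_eq_zero_of_lt (by omega), Nat.cast_zero, zero_mul])
    _ = _ := by
        refine sum_congr rfl fun i hi => ?_
        have hid : i ≤ d := Nat.lt_succ_iff.1 (mem_range.1 hi)
        rw [hsym_eq_sum_antidiagonalTuple, ← filter_piFinset_range_sum_eq_antidiagonalTuple hid,
          mul_sum]
        refine sum_congr rfl fun e he => ?_
        rw [(mem_filter.1 he).2,
          Nat.choose_symm_of_eq_add (show d + r = i + r + (d - i) by omega)]

/-- `h_d(x_1+1,…,x_r+1) = ∑_{i=0}^d C(d+r-1, d-i) h_i(x_1,…,x_r)`. -/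
theorem stmt2 (r d : ℕ) (hr : 1 ≤ r) (x : Fin r → ℚ) :
    hsym r d (fun i => x i + 1)
      = ∑ i ∈ Finset.range (d + 1), ((d + r - 1).choose (d - i) : ℚ) * hsym r i x := by
  obtain ⟨r, rfl⟩ := Nat.exists_eq_add_of_le' hr
  exact hsym_add_one r d x
end

section
/- The identity of rational functions ∑_{σ ∈ S_r} sgn(σ) / (x_{σ(1)} * (x_{σ(1)}+x_{σ(2)}) * ... * (x_{σ(1)}+...+x_{σ(r)})) = ∏_{i>j}(x_i - x_j) / (∏_i x_i * ∏_{i>j}(x_i + x_j)) holds in the field of rational functions in variables x_1, ..., x_r. -/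
/-
Sorting the permutations by their last value `p = σ(r)`, and using that the last factor of every
denominator is `∑ xᵢ`, the left-hand side `L` satisfies
`L(x) = (∑ₚ ± L(x without xₚ)) / ∑ xᵢ`.
The right-hand side satisfies the same recursion: removing `xₚ` from it costs a factor
`± ∏_{i≠p} (xₚ - xᵢ) / (xₚ ∏_{i≠p} (xₚ + xᵢ))`, and Lagrange interpolation of
`∏ (X + xᵢ) - ∏ (X - xᵢ)` at the nodes `xᵢ` gives
`∑ₚ xₚ ∏_{i≠p} (xₚ + xᵢ) / ∏_{i≠p} (xₚ - xᵢ) = ∑ xᵢ`.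
-/

/-- The variable `x_i` viewed inside the field of rational functions `ℚ(x_1,…,x_r)`. -/
noncomputable def Xv (r : ℕ) (i : Fin r) : FractionRing (MvPolynomial (Fin r) ℚ) :=
  algebraMap (MvPolynomial (Fin r) ℚ) (FractionRing (MvPolynomial (Fin r) ℚ)) (MvPolynomial.X i)

open Finset Equiv Polynomial

variable {F : Type*} [Field F] {n : ℕ}

theorem Lagrange.coeff_nodal_card_sub_one {ι : Type*} {s : Finset ι} (hs : s.Nonempty)
    (v : ι → F) : (Lagrange.nodal s v).coeff (#s - 1) = -∑ i ∈ s, v i := by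
  rw [← Lagrange.natDegree_nodal (v := v), ← nextCoeff_of_natDegree_pos, Lagrange.nodal,
    prod_X_sub_C_nextCoeff]
  simpa [Lagrange.natDegree_nodal] using hs.card_pos

theorem sum_mul_prod_add_div_prod_sub [NeZero (2 : F)] {ι : Type*} [Fintype ι] [DecidableEq ι]
    (x : ι → F) (hx : Function.Injective x) :
    ∑ p, x p * (∏ i ∈ univ.erase p, (x p + x i)) / ∏ i ∈ univ.erase p, (x p - x i)
      = ∑ i, x i := by
  rcases isEmpty_or_nonempty ι with hι | hι
  · simp
  set P := Lagrange.nodal univ (-x) - Lagrange.nodal univ x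
  have hdeg : P.degree < #(univ : Finset ι) := by
    rw [← Lagrange.degree_nodal (v := -x)]
    refine degree_sub_lt_left (by rw [Lagrange.degree_nodal, Lagrange.degree_nodal])
      Lagrange.nodal_ne_zero ?_
    rw [Lagrange.nodal_monic.leadingCoeff, Lagrange.nodal_monic.leadingCoeff]
  have hcoeff : P.coeff (#(univ : Finset ι) - 1) = 2 * ∑ i, x i := by
    rw [coeff_sub, Lagrange.coeff_nodal_card_sub_one univ_nonempty,
      Lagrange.coeff_nodal_card_sub_one univ_nonempty]
    simp only [Pi.neg_apply, sum_neg_distrib]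
    ring
  have heval (p : ι) : P.eval (x p) = 2 * (x p * ∏ i ∈ univ.erase p, (x p + x i)) := by
    rw [eval_sub, Lagrange.eval_nodal_at_node (mem_univ p), Lagrange.eval_nodal,
      ← mul_prod_erase univ _ (mem_univ p)]
    simp only [Pi.neg_apply, sub_neg_eq_add, sub_zero]
    ring
  have key := Lagrange.coeff_eq_sum hx.injOn hdeg
  simp only [hcoeff, heval, mul_div_assoc, ← mul_sum] at key
  simpa only [mul_div_assoc] using (mul_left_cancel₀ two_ne_zero key).symm

theorem Fin.prod_erase_eq_prod_succAbove {M : Type*} [CommMonoid M] (f : Fin (n + 1) → M)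
    (p : Fin (n + 1)) :
    ∏ i ∈ univ.erase p, f i = ∏ i, f (p.succAbove i) := by
  rw [Fin.univ_succAbove n p, erase_cons, prod_map, Fin.coe_succAboveEmb]

theorem Fin.cycleIcc_last_castSucc (p : Fin (n + 1)) (i : Fin n) :
    Fin.cycleIcc p (Fin.last n) i.castSucc = p.succAbove i := by
  rw [← Fin.succAbove_last]
  exact congrFun (Fin.cycleIcc_comp_succAbove p _ (Fin.le_last p)) i

theorem sum_perm_fin_succ_eq_sum_cycleIcc {M : Type*} [AddCommMonoid M]
    (f : Perm (Fin (n + 1)) → M) :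
    ∑ σ, f σ = ∑ p, ∑ τ : Perm (Fin n),
      f (Fin.cycleIcc p (Fin.last n) * τ.viaFintypeEmbedding Fin.castSuccEmb) := by
  set φ : Fin (n + 1) × Perm (Fin n) → Perm (Fin (n + 1)) :=
    fun pτ => Fin.cycleIcc pτ.1 (Fin.last n) * pτ.2.viaFintypeEmbedding Fin.castSuccEmb
  rw [← Fintype.sum_prod_type']
  refine (Fintype.sum_bijective φ ((Fintype.bijective_iff_injective_and_card φ).mpr ⟨?_, ?_⟩)
    _ _ fun _ => rfl).symm
  · have hlast (p : Fin (n + 1)) (τ : Perm (Fin n)) : φ (p, τ) (Fin.last n) = p := by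
      have : Fin.last n ∉ Set.range Fin.castSuccEmb := by
        rintro ⟨i, hi⟩
        exact (Fin.castSucc_lt_last i).ne hi
      simp [φ, Perm.viaFintypeEmbedding_apply_notMem_range _ _ this,
        Fin.cycleIcc_of_last (Fin.le_last p)]
    rintro ⟨p, τ⟩ ⟨p', τ'⟩ h
    obtain rfl : p = p' := by rw [← hlast p τ, h, hlast p' τ']
    exact Prod.ext rfl (Perm.extendDomainHom_injective _ (mul_left_cancel h))
  · simp [Fintype.card_perm, Nat.factorial_succ]

def vandermondeProd (x : Fin n → F) : F := ∏ j, ∏ i ∈ Iio j, (x j - x i)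

theorem vandermondeProd_comp_perm (x : Fin n → F) (σ : Perm (Fin n)) :
    vandermondeProd (x ∘ σ) = Perm.sign σ * vandermondeProd x :=
  σ.prod_Iio_comp_eq_sign_mul_prod (f := fun i j => x j - x i) fun _ _ => by ring

theorem vandermondeProd_succ (x : Fin (n + 1) → F) :
    vandermondeProd x
      = vandermondeProd (Fin.init x) * ∏ i, (x (Fin.last n) - Fin.init x i) := by
  simp only [vandermondeProd, Fin.prod_univ_castSucc, Fin.Iio_last_eq_map, prod_map,
    ← Fin.map_castSuccEmb_Iio]
  rfl

theorem vandermondeProd_eq_succAbove (x : Fin (n + 1) → F) (p : Fin (n + 1)) :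
    vandermondeProd x = (-1) ^ (n - p : ℕ) * vandermondeProd (x ∘ p.succAbove)
      * ∏ i, (x p - x (p.succAbove i)) := by
  -- `cycleIcc p (last n)` moves `xₚ` to the last position, with sign `(-1) ^ (n - p)`.
  have hc := vandermondeProd_comp_perm x (Fin.cycleIcc p (Fin.last n))
  have hinit : Fin.init (x ∘ Fin.cycleIcc p (Fin.last n)) = x ∘ p.succAbove := by
    funext i
    simp [Fin.init, Fin.cycleIcc_last_castSucc]
  rw [vandermondeProd_succ, hinit, Function.comp_apply, Fin.cycleIcc_of_last (Fin.le_last p),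
    Fin.sign_cycleIcc_of_le (Fin.le_last p), Fin.val_last] at hc
  have hsq : ((-1 : F) ^ (n - p : ℕ)) ^ 2 = 1 := by
    rw [← pow_mul, pow_mul', neg_one_sq, one_pow]
  push_cast [Function.comp_apply] at hc
  linear_combination (-(-1 : F) ^ (n - p : ℕ)) * hc - vandermondeProd x * hsq

def prefixSumProd (x : Fin n → F) : F := ∏ k, ∑ j ∈ Iic k, x j

def altSumInvPrefixProd (x : Fin n → F) : F :=
  ∑ σ : Perm (Fin n), (Perm.sign σ : ℤ) / prefixSumProd (x ∘ σ)

theorem prefixSumProd_succ (x : Fin (n + 1) → F) :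
    prefixSumProd x = prefixSumProd (Fin.init x) * ∑ i, x i := by
  simp only [prefixSumProd, Fin.prod_univ_castSucc, ← Fin.map_castSuccEmb_Iic, sum_map]
  congr
  ext i
  simp [Fin.le_last]

theorem altSumInvPrefixProd_succ (x : Fin (n + 1) → F) :
    altSumInvPrefixProd x
      = (∑ p : Fin (n + 1), (-1) ^ (n - p : ℕ) * altSumInvPrefixProd (x ∘ p.succAbove))
        / ∑ i, x i := by
  rw [altSumInvPrefixProd, sum_perm_fin_succ_eq_sum_cycleIcc, sum_div]
  refine sum_congr rfl fun p _ => ?_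
  rw [altSumInvPrefixProd, mul_sum, sum_div]
  refine sum_congr rfl fun τ _ => ?_
  set σ := Fin.cycleIcc p (Fin.last n) * τ.viaFintypeEmbedding Fin.castSuccEmb
  have hinit : Fin.init (x ∘ σ) = (x ∘ p.succAbove) ∘ τ := by
    funext i
    simp only [Fin.init, Function.comp_apply, σ, Perm.mul_apply]
    rw [← Fin.coe_castSuccEmb, Perm.viaFintypeEmbedding_apply_image, Fin.coe_castSuccEmb,
      Fin.cycleIcc_last_castSucc]
  rw [prefixSumProd_succ, hinit, Fintype.sum_equiv σ (x ∘ σ) x fun _ => rfl, Perm.sign_mul,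
    Fin.sign_cycleIcc_of_le (Fin.le_last p), Perm.viaFintypeEmbedding_sign, Fin.val_last]
  push_cast
  ring

def closedForm (x : Fin n → F) : F :=
  vandermondeProd x / ((∏ i, x i) * ∏ j, ∏ i ∈ Iio j, (x j + x i))

/-- Trading `∏ (xⱼ + xᵢ)` for `V(x²) / V(x)` leaves only Vandermonde products, whose behaviour
under permutations is known. -/
theorem closedForm_eq_sq_div (x : Fin n → F) :
    closedForm x = vandermondeProd x ^ 2 / ((∏ i, x i) * vandermondeProd (x ^ 2)) := by
  have hmul : vandermondeProd x * ∏ j, ∏ i ∈ Iio j, (x j + x i)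
      = vandermondeProd (x ^ 2) := by
    simp only [vandermondeProd, ← prod_mul_distrib, Pi.pow_apply]
    exact prod_congr rfl fun j _ => prod_congr rfl fun i _ => by ring
  rw [closedForm, ← hmul]
  rcases eq_or_ne (vandermondeProd x) 0 with h | h
  · simp [h]
  · field_simp

theorem closedForm_succAbove (x : Fin (n + 1) → F) (p : Fin (n + 1)) (hp : x p ≠ 0)
    (hsub : ∏ i, (x p - x (p.succAbove i)) ≠ 0)
    (hadd : ∏ i, (x p + x (p.succAbove i)) ≠ 0) :
    (-1) ^ (n - p : ℕ) * closedForm (x ∘ p.succAbove) = closedForm x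
      * (x p * (∏ i, (x p + x (p.succAbove i))) / ∏ i, (x p - x (p.succAbove i))) := by
  have hsq : ∏ i, ((x ^ 2) p - (x ^ 2) (p.succAbove i))
      = (∏ i, (x p - x (p.succAbove i))) * ∏ i, (x p + x (p.succAbove i)) := by
    rw [← prod_mul_distrib]
    exact prod_congr rfl fun i _ => by simp only [Pi.pow_apply]; ring
  rw [closedForm_eq_sq_div, closedForm_eq_sq_div x, vandermondeProd_eq_succAbove x p,
    vandermondeProd_eq_succAbove (x ^ 2) p, hsq, Fin.prod_univ_succAbove _ p,
    show (x ∘ p.succAbove) ^ 2 = (x ^ 2) ∘ p.succAbove from rfl]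
  simp only [Function.comp_apply]
  rcases neg_one_pow_eq_or F (n - p : ℕ) with h | h <;> rw [h] <;> field_simp

theorem altSumInvPrefixProd_eq_closedForm [NeZero (2 : F)] (x : Fin n → F)
    (hinj : Function.Injective x)
    (hsum : ∀ s : Finset (Fin n), s.Nonempty → ∑ i ∈ s, x i ≠ 0) :
    altSumInvPrefixProd x = closedForm x := by
  induction n with
  | zero => simp [altSumInvPrefixProd, closedForm, prefixSumProd, vandermondeProd]
  | succ n ih =>
    have hx (p : Fin (n + 1)) : x p ≠ 0 := by simpa using hsum {p} (singleton_nonempty p)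
    have hsub (p : Fin (n + 1)) : ∏ i, (x p - x (p.succAbove i)) ≠ 0 :=
      prod_ne_zero_iff.mpr fun i _ => sub_ne_zero.mpr (hinj.ne (Fin.succAbove_ne p i).symm)
    have hadd (p : Fin (n + 1)) : ∏ i, (x p + x (p.succAbove i)) ≠ 0 :=
      prod_ne_zero_iff.mpr fun i _ => by
        simpa [sum_pair (Fin.succAbove_ne p i).symm]
          using hsum _ (insert_nonempty p {p.succAbove i})
    have ih' (p : Fin (n + 1)) :
        altSumInvPrefixProd (x ∘ p.succAbove) = closedForm (x ∘ p.succAbove) :=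
      ih _ (hinj.comp Fin.succAbove_right_injective) fun s hs => by
        simpa using hsum (s.map p.succAboveEmb) hs.map
    have hlag := sum_mul_prod_add_div_prod_sub x hinj
    simp only [Fin.prod_erase_eq_prod_succAbove] at hlag
    rw [altSumInvPrefixProd_succ,
      sum_congr rfl fun p _ => by rw [ih' p, closedForm_succAbove x p (hx p) (hsub p) (hadd p)],
      ← mul_sum, hlag, mul_div_assoc, div_self (hsum univ univ_nonempty), mul_one]

theorem prod_filter_lt_eq_prod_Iio {α M : Type*} [Fintype α] [LinearOrder α]
    [LocallyFiniteOrderBot α] [CommMonoid M] (g : α → α → M) :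
    ∏ p ∈ univ.filter (fun p : α × α => p.2 < p.1), g p.1 p.2
      = ∏ j, ∏ i ∈ Iio j, g j i := by
  rw [prod_filter, Fintype.prod_prod_type]
  refine prod_congr rfl fun j _ => ?_
  rw [← prod_filter, filter_gt_eq_Iio]

theorem Xv_injective (r : ℕ) : Function.Injective (Xv r) :=
  fun _ _ h => MvPolynomial.X_injective (IsFractionRing.injective _ _ h)

theorem sum_Xv_ne_zero (r : ℕ) (s : Finset (Fin r)) (hs : s.Nonempty) :
    ∑ i ∈ s, Xv r i ≠ 0 := by
  intro h
  have hX : (∑ i ∈ s, MvPolynomial.X i : MvPolynomial (Fin r) ℚ) = 0 :=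
    IsFractionRing.injective _ (FractionRing (MvPolynomial (Fin r) ℚ)) (by simpa [Xv] using h)
  exact hs.ne_empty (by simpa using congrArg (MvPolynomial.eval fun _ => (1 : ℚ)) hX)

/-- `∑_{σ∈S_r} sgn σ / (x_{σ(1)}(x_{σ(1)}+x_{σ(2)})⋯(x_{σ(1)}+⋯+x_{σ(r)}))
    = ∏_{i>j}(x_i-x_j) / (∏_i x_i ∏_{i>j}(x_i+x_j))`
in the field of rational functions `ℚ(x_1,…,x_r)`. -/
theorem stmt3 (r : ℕ) :
    ∑ σ : Equiv.Perm (Fin r),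
        ((Equiv.Perm.sign σ : ℤ) : FractionRing (MvPolynomial (Fin r) ℚ)) /
          ∏ k : Fin r, ∑ j ∈ Finset.univ.filter (· ≤ k), Xv r (σ j)
      = (∏ p ∈ Finset.univ.filter (fun p : Fin r × Fin r => p.2 < p.1),
            (Xv r p.1 - Xv r p.2)) /
        ((∏ i : Fin r, Xv r i) *
          ∏ p ∈ Finset.univ.filter (fun p : Fin r × Fin r => p.2 < p.1),
            (Xv r p.1 + Xv r p.2)) := by
  have h := altSumInvPrefixProd_eq_closedForm (Xv r) (Xv_injective r) (sum_Xv_ne_zero r)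
  rw [prod_filter_lt_eq_prod_Iio fun a b => Xv r a - Xv r b,
    prod_filter_lt_eq_prod_Iio fun a b => Xv r a + Xv r b]
  simpa only [altSumInvPrefixProd, prefixSumProd, closedForm, vandermondeProd, filter_ge_eq_Iic,
    Function.comp_apply] using h
end

section
/- For fixed nonnegative integers a_1, ..., a_r, the function n ↦ ∑_{0 ≤ k_1 < k_2 < ... < k_r < n} k_1^{a_1} * k_2^{a_2} * ... * k_r^{a_r} is a polynomial in n of degree a_1 + ... + a_r + r, with leading coefficient 1 / ((a_1+1)(a_1+a_2+2)...(a_1+...+a_r+r)). -/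
open scoped BigOperators

/-- `∑_{0 ≤ k_1 < k_2 < ⋯ < k_r < n} k_1^{a_1} ⋯ k_r^{a_r}` (with `0^0 = 1`). -/
def sumPow (r : ℕ) (a : Fin r → ℕ) (n : ℕ) : ℚ :=
  ∑ k ∈ (Fintype.piFinset fun _ : Fin r => Finset.range n).filter
      (fun k => ∀ i j : Fin r, i < j → k i < k j),
    ∏ i, (k i : ℚ) ^ a i

/-!
Splitting off the largest index gives `S_a(n) = ∑_{m<n} m^{a_r} S_{a'}(m)`, where `a'` drops `a_r`.
By induction `S_{a'}` is a polynomial `p` of degree `a_1+⋯+a_{r-1}+r-1`, so `S_a(n) = ∑_{m<n} q(m)`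
with `q = X^{a_r} p`. Faulhaber's formula (via Bernoulli polynomials) shows that the indefinite
sum of a polynomial `q` of degree `e` is a polynomial of degree `e+1` with leading coefficient
`lc(q)/(e+1)`; here `e+1 = a_1+⋯+a_r+r`, which is the new factor of the denominator.
-/

open Finset Polynomial

namespace Polynomial

noncomputable def faulhaber (k : ℕ) : ℚ[X] :=
  C (k + 1 : ℚ)⁻¹ * (bernoulli (k + 1) - C (_root_.bernoulli (k + 1)))

lemma eval_faulhaber (k n : ℕ) : (faulhaber k).eval (n : ℚ) = ∑ m ∈ range n, (m : ℚ) ^ k := by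
  rw [faulhaber, eval_mul, eval_sub, eval_C, eval_C, ← sum_range_pow_eq_bernoulli_sub,
    inv_mul_cancel_left₀ (by positivity)]

lemma natDegree_faulhaber_le (k : ℕ) : (faulhaber k).natDegree ≤ k + 1 := by
  refine natDegree_le_iff_coeff_eq_zero.2 fun N hN => ?_
  have hN : ¬ N ≤ k + 1 := by exact_mod_cast hN.not_ge
  simp [faulhaber, coeff_bernoulli, hN, coeff_C, show N ≠ 0 by omega]

lemma coeff_faulhaber_succ (k : ℕ) : (faulhaber k).coeff (k + 1) = (k + 1 : ℚ)⁻¹ := by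
  simp [faulhaber, coeff_bernoulli]

noncomputable def indefSum (q : ℚ[X]) : ℚ[X] :=
  q.sum fun k c => C c * faulhaber k

lemma eval_indefSum (q : ℚ[X]) (n : ℕ) :
    (indefSum q).eval (n : ℚ) = ∑ m ∈ range n, q.eval (m : ℚ) := by
  simp only [indefSum, eval_eq_sum (p := q), Polynomial.sum_def, eval_finsetSum, eval_mul, eval_C,
    eval_faulhaber, mul_sum]
  exact sum_comm

lemma natDegree_indefSum_le (q : ℚ[X]) : (indefSum q).natDegree ≤ q.natDegree + 1 :=
  natDegree_sum_le_of_forall_le _ _ fun k hk =>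
    (natDegree_C_mul_le _ _).trans <|
      (natDegree_faulhaber_le k).trans (by simpa using le_natDegree_of_mem_supp k hk)

lemma coeff_indefSum_natDegree_succ (q : ℚ[X]) :
    (indefSum q).coeff (q.natDegree + 1) = q.leadingCoeff / (q.natDegree + 1) := by
  rw [indefSum, Polynomial.sum_def, finsetSum_coeff, sum_eq_single q.natDegree]
  · rw [coeff_C_mul, coeff_faulhaber_succ, leadingCoeff, div_eq_mul_inv]
  · intro k hk hne
    have hlt : k < q.natDegree := (le_natDegree_of_mem_supp k hk).lt_of_ne hne
    rw [coeff_C_mul, coeff_eq_zero_of_natDegree_lt ((natDegree_faulhaber_le k).trans_lt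
      (by omega)), mul_zero]
  · intro h
    rw [notMem_support_iff.1 h, coeff_C_mul, zero_mul]

lemma natDegree_indefSum {q : ℚ[X]} (hq : q ≠ 0) : (indefSum q).natDegree = q.natDegree + 1 :=
  natDegree_eq_of_le_of_coeff_ne_zero (natDegree_indefSum_le q) <| by
    rw [coeff_indefSum_natDegree_succ]
    exact div_ne_zero (leadingCoeff_ne_zero.2 hq) (by positivity)

lemma leadingCoeff_indefSum {q : ℚ[X]} (hq : q ≠ 0) :
    (indefSum q).leadingCoeff = q.leadingCoeff / (q.natDegree + 1) := by
  rw [leadingCoeff, natDegree_indefSum hq, coeff_indefSum_natDegree_succ]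

end Polynomial

lemma Fin.strictMono_snoc_iff {α : Type*} [Preorder α] {r : ℕ} {f : Fin r → α} {x : α} :
    StrictMono (Fin.snoc f x : Fin (r + 1) → α) ↔ StrictMono f ∧ ∀ i, f i < x := by
  refine ⟨fun h => ⟨fun i j hij => ?_, fun i => ?_⟩, fun ⟨hf, hx⟩ i j hij => ?_⟩
  · simpa using h (Fin.castSucc_lt_castSucc_iff.2 hij)
  · simpa using h (Fin.castSucc_lt_last i)
  · induction j using Fin.lastCases with
    | last =>
      obtain ⟨i, rfl⟩ := Fin.exists_castSucc_eq.2 hij.ne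
      simpa using hx i
    | cast j =>
      obtain ⟨i, rfl⟩ := Fin.exists_castSucc_eq.2 (hij.trans (Fin.castSucc_lt_last j)).ne
      simpa using hf (Fin.castSucc_lt_castSucc_iff.1 hij)

def increasingTuples (r n : ℕ) : Finset (Fin r → ℕ) :=
  (Fintype.piFinset fun _ : Fin r => range n).filter fun k => ∀ i j : Fin r, i < j → k i < k j

lemma mem_increasingTuples {r n : ℕ} {k : Fin r → ℕ} :
    k ∈ increasingTuples r n ↔ StrictMono k ∧ ∀ i, k i < n := by
  simp [increasingTuples, StrictMono, and_comm]

lemma snoc_mem_increasingTuples {r n m : ℕ} {k : Fin r → ℕ} :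
    (Fin.snoc k m : Fin (r + 1) → ℕ) ∈ increasingTuples (r + 1) n ↔
      m < n ∧ k ∈ increasingTuples r m := by
  simp only [mem_increasingTuples, Fin.strictMono_snoc_iff, Fin.forall_fin_succ', Fin.snoc_castSucc,
    Fin.snoc_last]
  exact ⟨fun ⟨⟨hk, hkm⟩, _, hm⟩ => ⟨hm, hk, hkm⟩,
    fun ⟨hm, hk, hkm⟩ => ⟨⟨hk, hkm⟩, fun i => (hkm i).trans hm, hm⟩⟩

lemma sumPow_eq_sum_increasingTuples (r : ℕ) (a : Fin r → ℕ) (n : ℕ) :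
    sumPow r a n = ∑ k ∈ increasingTuples r n, ∏ i, (k i : ℚ) ^ a i :=
  rfl

lemma sumPow_zero (a : Fin 0 → ℕ) (n : ℕ) : sumPow 0 a n = 1 := by
  simp [sumPow]

lemma sumPow_succ (r : ℕ) (a : Fin (r + 1) → ℕ) (n : ℕ) :
    sumPow (r + 1) a n =
      ∑ m ∈ range n, (m : ℚ) ^ a (Fin.last r) * sumPow r (Fin.init a) m := by
  simp only [sumPow_eq_sum_increasingTuples, mul_sum]
  rw [sum_sigma']
  refine sum_nbij' (fun k => ⟨k (Fin.last r), Fin.init k⟩) (fun x => Fin.snoc x.2 x.1)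
    (fun k hk => ?_) (fun x hx => ?_) (fun k _ => Fin.snoc_init_self k)
    (fun x _ => by simp) (fun k _ => ?_)
  · rw [← Fin.snoc_init_self k, snoc_mem_increasingTuples] at hk
    simpa using hk
  · rw [snoc_mem_increasingTuples]
    simpa using hx
  · rw [Fin.prod_univ_castSucc, mul_comm]
    rfl

lemma prod_partialSum_add_succ (r : ℕ) (a : Fin (r + 1) → ℕ) :
    ∏ i : Fin (r + 1), ((∑ j ∈ univ.filter (· ≤ i), (a j : ℚ)) + (i : ℚ) + 1) =
      (∏ i : Fin r, ((∑ j ∈ univ.filter (· ≤ i), (Fin.init a j : ℚ)) + (i : ℚ) + 1)) *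
        ((∑ i, (a i : ℚ)) + r + 1) := by
  rw [Fin.prod_univ_castSucc, filter_true_of_mem fun j _ => Fin.le_last j]
  congr 1
  refine prod_congr rfl fun i _ => ?_
  rw [sum_filter, sum_filter, Fin.sum_univ_castSucc, if_neg (Fin.castSucc_lt_last i).not_ge]
  simp [Fin.init]

/-- The function `n ↦ ∑_{0 ≤ k_1 < ⋯ < k_r < n} k_1^{a_1}⋯k_r^{a_r}` is a polynomial in `n`
of degree `a_1+⋯+a_r+r` with leading coefficient
`1/((a_1+1)(a_1+a_2+2)⋯(a_1+⋯+a_r+r))`. -/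
theorem stmt4 (r : ℕ) (a : Fin r → ℕ) :
    ∃ p : Polynomial ℚ,
      (∀ n : ℕ, p.eval (n : ℚ) = sumPow r a n) ∧
      p.natDegree = (∑ i, a i) + r ∧
      p.leadingCoeff =
        1 / ∏ i : Fin r, ((∑ j ∈ Finset.univ.filter (· ≤ i), (a j : ℚ)) + (i : ℚ) + 1) := by
  induction r with
  | zero => exact ⟨1, by simp [sumPow_zero], by simp, by simp⟩
  | succ r ih =>
    obtain ⟨p, hp_eval, hp_deg, hp_lead⟩ := ih (Fin.init a)
    have hp : p ≠ 0 := leadingCoeff_ne_zero.1 (by rw [hp_lead]; positivity)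
    set q : ℚ[X] := X ^ a (Fin.last r) * p
    have hq : q ≠ 0 := mul_ne_zero (pow_ne_zero _ X_ne_zero) hp
    have hq_deg : q.natDegree = a (Fin.last r) + p.natDegree := by
      rw [natDegree_mul (pow_ne_zero _ X_ne_zero) hp, natDegree_X_pow]
    refine ⟨indefSum q, fun n => ?_, ?_, ?_⟩
    · rw [eval_indefSum, sumPow_succ]
      simp [q, hp_eval]
    · rw [natDegree_indefSum hq, hq_deg, hp_deg, Fin.sum_univ_castSucc]
      simp only [Fin.init]
      omega
    · rw [leadingCoeff_indefSum hq, leadingCoeff_mul, leadingCoeff_X_pow, one_mul, hp_lead, hq_deg,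
        hp_deg, prod_partialSum_add_succ, Fin.sum_univ_castSucc, div_div]
      push_cast
      simp only [Fin.init]
      ring
end

section
/- The Lascoux coefficients satisfy: for i < j, ψ_{{i,j}} = ∑_{k=i+1}^{j} C(i+j, k), where ψ is defined by the expansion h_d({x_a+x_b : 1 ≤ a ≤ b ≤ 2}) = ∑_{λ(I) ⊢ d, #I = 2} ψ_I s_{λ(I)}(x_1, x_2). -/
/-!
Multiplying by `(x - y)²` turns both sides into `2^(d+1) (x^(d+2) + y^(d+2)) - (x + y)^(d+2)`.
On the left this is the Vandermonde identity
`(a - b)(a - c)(b - c) h_d(a, b, c) = a^(d+2) (b - c) - b^(d+2) (a - c) + c^(d+2) (a - b)`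
at the arithmetic progression `a, b, c = 2x, x + y, 2y`. On the right, exchange the sum over
`I = {i, j}` with the sum over `k` defining `ψ_I`: for fixed `k` the pairs with `i < k ≤ j` are
those with `i < min(k, d + 2 - k)`, over which `(x - y)² s_{(j-1,i)}` telescopes, leaving a
binomial sum. So the identity holds for `x ≠ y`, hence for all `x` by continuity.
-/

open scoped BigOperators

/-- The Schur polynomial `s_{(a,b)}(x,y) = ∑_{k=0}^{a-b} x^{b+k} y^{a-k}` in two variables,
for a partition `(a, b)` with `b ≤ a`. -/
def schur2 (a b : ℕ) (x y : ℚ) : ℚ :=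
  ∑ k ∈ Finset.range (a - b + 1), x ^ (b + k) * y ^ (a - k)

open Finset

section CommRing

variable {R : Type*} [CommRing R]

lemma sub_mul_sum_pow_mul_pow (u v : R) (n : ℕ) :
    (u - v) * ∑ i ∈ range (n + 1), u ^ i * v ^ (n - i) = u ^ (n + 1) - v ^ (n + 1) := by
  simpa [mul_comm] using geom_sum₂_mul u v (n + 1)

def mirrorSum (n k : ℕ) (x y : R) : R := x ^ (n - k) * y ^ k + x ^ k * y ^ (n - k)

lemma mirrorSum_zero (n : ℕ) (x y : R) : mirrorSum n 0 x y = x ^ n + y ^ n := by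
  simp [mirrorSum]

lemma mirrorSum_sub {n k : ℕ} (hk : k ≤ n) (x y : R) :
    mirrorSum n (n - k) x y = mirrorSum n k x y := by
  rw [mirrorSum, mirrorSum, Nat.sub_sub_self hk, add_comm]

lemma sum_choose_mul_mirrorSum (n : ℕ) (x y : R) :
    ∑ k ∈ range (n + 1), (n.choose k : R) * mirrorSum (n + 1) k x y = (x + y) ^ (n + 1) := by
  have hx : x * (y + x) ^ n
      = ∑ k ∈ range (n + 1), (n.choose k : R) * (x ^ (n + 1 - k) * y ^ k) := by
    rw [add_pow, mul_sum]
    refine sum_congr rfl fun k hk => ?_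
    rw [show n + 1 - k = n - k + 1 by rw [mem_range] at hk; omega]
    ring
  have hy : y * (x + y) ^ n
      = ∑ k ∈ range (n + 1), (n.choose k : R) * (x ^ k * y ^ (n + 1 - k)) := by
    rw [add_pow, mul_sum]
    refine sum_congr rfl fun k hk => ?_
    rw [show n + 1 - k = n - k + 1 by rw [mem_range] at hk; omega]
    ring
  simp_rw [mirrorSum, mul_add, sum_add_distrib, ← hx, ← hy]
  ring

end CommRing

lemma hsym_three (d : ℕ) (a b c : ℚ) :
    hsym 3 d ![a, b, c]
      = ∑ q ∈ range (d + 1), b ^ q * ∑ i ∈ range (d - q + 1), a ^ i * c ^ (d - q - i) := by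
  have hmem (e : Fin 3 → ℕ) : e ∈ (Fintype.piFinset fun _ => range (d + 1)).filter
      (fun e => ∑ i, e i = d) ↔ e 0 + e 1 + e 2 = d := by
    simp [Fin.forall_fin_succ, Fin.sum_univ_three]
    omega
  simp_rw [mul_sum]
  rw [hsym, sum_sigma']
  refine sum_nbij' (fun e => ⟨e 1, e 0⟩) (fun p => ![p.2, p.1, d - p.1 - p.2]) ?_ ?_ ?_
    (fun _ _ => rfl) ?_
  · intro e he
    rw [hmem] at he
    simp only [mem_sigma, mem_range]
    omega
  · rintro ⟨q, i⟩ hqi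
    simp only [mem_sigma, mem_range] at hqi
    rw [hmem]
    show i + q + (d - q - i) = d
    omega
  · intro e he
    rw [hmem] at he
    ext k
    fin_cases k
    · rfl
    · rfl
    · show d - e 1 - e 0 = e 2
      omega
  · intro e he
    rw [hmem] at he
    rw [Fin.prod_univ_three, show d - e 1 - e 0 = e 2 by omega]
    change a ^ e 0 * b ^ e 1 * c ^ e 2 = _
    ring

lemma vandermonde_mul_hsym_three (d : ℕ) (a b c : ℚ) :
    (a - b) * (a - c) * (b - c) * hsym 3 d ![a, b, c]
      = a ^ (d + 2) * (b - c) - b ^ (d + 2) * (a - c) + c ^ (d + 2) * (a - b) := by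
  have hac : (a - c) * hsym 3 d ![a, b, c]
      = a * ∑ q ∈ range (d + 1), b ^ q * a ^ (d - q)
        - c * ∑ q ∈ range (d + 1), b ^ q * c ^ (d - q) := by
    rw [hsym_three, mul_sum, mul_sum, mul_sum, ← sum_sub_distrib]
    refine sum_congr rfl fun q _ => ?_
    linear_combination b ^ q * sub_mul_sum_pow_mul_pow a c (d - q)
  linear_combination (a - b) * (b - c) * hac - a * (b - c) * sub_mul_sum_pow_mul_pow b a d
    - c * (a - b) * sub_mul_sum_pow_mul_pow b c d

lemma schur2_mul_sub {a b : ℕ} (hba : b ≤ a) (x y : ℚ) :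
    schur2 a b x y * (x - y) = x ^ (a + 1) * y ^ b - x ^ b * y ^ (a + 1) := by
  have h : schur2 a b x y = x ^ b * y ^ b * ∑ k ∈ range (a - b + 1), x ^ k * y ^ (a - b - k) := by
    rw [schur2, mul_sum]
    refine sum_congr rfl fun k hk => ?_
    rw [show a - k = b + (a - b - k) by rw [mem_range] at hk; omega]
    ring
  rw [h, mul_assoc, mul_comm _ (x - y), sub_mul_sum_pow_mul_pow,
    show a + 1 = b + (a - b + 1) by omega]
  ring

lemma sq_sub_mul_schur2 {d i : ℕ} (hi : 2 * i ≤ d) (x y : ℚ) :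
    (x - y) ^ 2 * schur2 (d - i) i x y
      = mirrorSum (d + 2) i x y - mirrorSum (d + 2) (i + 1) x y := by
  rw [sq, mul_assoc, mul_comm (x - y) (schur2 _ _ _ _), schur2_mul_sub (by omega), mirrorSum,
    mirrorSum, show d + 2 - i = d - i + 1 + 1 by omega, show d + 2 - (i + 1) = d - i + 1 by omega]
  ring

lemma sq_sub_mul_sum_schur2 {d m : ℕ} (hm : 2 * m ≤ d + 2) (x y : ℚ) :
    (x - y) ^ 2 * ∑ i ∈ range m, schur2 (d - i) i x y
      = mirrorSum (d + 2) 0 x y - mirrorSum (d + 2) m x y := by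
  rw [mul_sum, ← sum_range_sub' (fun i => mirrorSum (d + 2) i x y)]
  exact sum_congr rfl fun i hi => sq_sub_mul_schur2 (by rw [mem_range] at hi; omega) x y

def lascouxExpansion (d : ℕ) (x y : ℚ) : ℚ :=
  ∑ p ∈ (range (d + 2) ×ˢ range (d + 2)).filter (fun p => p.1 < p.2 ∧ p.1 + p.2 = d + 1),
    (∑ k ∈ Icc (p.1 + 1) p.2, ((p.1 + p.2).choose k : ℚ)) * schur2 (p.2 - 1) p.1 x y

lemma lascouxExpansion_eq_sum_choose (d : ℕ) (x y : ℚ) :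
    lascouxExpansion d x y = ∑ k ∈ range (d + 2),
      ((d + 1).choose k : ℚ) * ∑ i ∈ range (min k (d + 2 - k)), schur2 (d - i) i x y := by
  have hmem (p : ℕ × ℕ) : p ∈ (range (d + 2) ×ˢ range (d + 2)).filter
      (fun p => p.1 < p.2 ∧ p.1 + p.2 = d + 1) ↔ p.1 < p.2 ∧ p.1 + p.2 = d + 1 := by
    rw [mem_filter, mem_product, mem_range, mem_range]
    omega
  have reindex : lascouxExpansion d x y = ∑ i ∈ range (d / 2 + 1),
      (∑ k ∈ Icc (i + 1) (d + 1 - i), ((d + 1).choose k : ℚ)) * schur2 (d - i) i x y := by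
    refine sum_nbij' Prod.fst (fun i => (i, d + 1 - i)) ?_ ?_ ?_ (fun _ _ => rfl) ?_
    · rintro ⟨i, j⟩ hij
      rw [hmem] at hij
      rw [mem_range]
      omega
    · intro i hi
      rw [mem_range] at hi
      rw [hmem]
      omega
    · rintro ⟨i, j⟩ hij
      rw [hmem] at hij
      rw [show d + 1 - i = j by omega]
    · rintro ⟨i, j⟩ hij
      rw [hmem] at hij
      obtain rfl : j = d + 1 - i := by omega
      rw [hij.2, show d + 1 - i - 1 = d - i by omega]
  simp_rw [reindex, sum_mul]
  rw [sum_comm' (t' := range (d + 2)) (s' := fun k => range (min k (d + 2 - k)))]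
  · simp_rw [mul_sum]
  · intro i k
    simp only [mem_range, mem_Icc, lt_min_iff]
    omega

lemma sq_sub_mul_lascouxExpansion (d : ℕ) (x y : ℚ) :
    (x - y) ^ 2 * lascouxExpansion d x y
      = 2 ^ (d + 1) * (x ^ (d + 2) + y ^ (d + 2)) - (x + y) ^ (d + 2) := by
  have hterm : ∀ k ∈ range (d + 2), (x - y) ^ 2 * (((d + 1).choose k : ℚ) *
      ∑ i ∈ range (min k (d + 2 - k)), schur2 (d - i) i x y)
        = ((d + 1).choose k : ℚ) * (mirrorSum (d + 2) 0 x y - mirrorSum (d + 2) k x y) := by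
    intro k hk
    rw [mul_left_comm, sq_sub_mul_sum_schur2 (by omega)]
    rcases min_cases k (d + 2 - k) with ⟨hmin, -⟩ | ⟨hmin, -⟩ <;> rw [hmin]
    rw [mirrorSum_sub (by rw [mem_range] at hk; omega)]
  rw [lascouxExpansion_eq_sum_choose, mul_sum, sum_congr rfl hterm]
  simp_rw [mul_sub]
  rw [sum_sub_distrib, ← sum_mul, ← Nat.cast_sum, Nat.sum_range_choose, sum_choose_mul_mirrorSum,
    mirrorSum_zero]
  push_cast
  ring

/-- `ψ_{{i,j}} = ∑_{k=i+1}^{j} C(i+j,k)`, stated as the defining expansion: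
`h_d(2x, x+y, 2y) = ∑_{i<j, i+j=d+1} (∑_{k=i+1}^{j} C(i+j,k)) · s_{(j-1,i)}(x,y)`. -/
theorem stmt7 (d : ℕ) (x y : ℚ) :
    hsym 3 d ![2 * x, x + y, 2 * y]
      = ∑ p ∈ (Finset.range (d + 2) ×ˢ Finset.range (d + 2)).filter
            (fun p => p.1 < p.2 ∧ p.1 + p.2 = d + 1),
          (∑ k ∈ Finset.Icc (p.1 + 1) p.2, ((p.1 + p.2).choose k : ℚ)) *
            schur2 (p.2 - 1) p.1 x y := by
  have off_diagonal : Set.EqOn (fun z => hsym 3 d ![2 * z, z + y, 2 * y])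
      (fun z => lascouxExpansion d z y) {y}ᶜ := by
    intro z hz
    refine mul_left_cancel₀ (mul_ne_zero two_ne_zero (pow_ne_zero 3 (sub_ne_zero.mpr hz))) ?_
    linear_combination vandermonde_mul_hsym_three d (2 * z) (z + y) (2 * y)
      - 2 * (z - y) * sq_sub_mul_lascouxExpansion d z y
  have hl : Continuous fun z => hsym 3 d ![2 * z, z + y, 2 * y] := by
    simp only [hsym_three]
    fun_prop
  have hr : Continuous fun z => lascouxExpansion d z y := by
    simp only [lascouxExpansion, schur2]
    fun_prop
  exact congrFun (Continuous.ext_on (dense_compl_singleton y) hl hr off_diagonal) x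
end

section
/- Let I = {i_1 < ... < i_r} and J = {j_1 < ... < j_r} be sets of nonnegative integers, and define s_{I,J} as the determinant of the r×r matrix whose (k,l)-entry is C(i_k, j_l). Then the matrices (s_{I,J})_{I,J} and ((-1)^{∑I - ∑J} s_{I,J})_{I,J}, indexed by sets of size r ordered compatibly with ≤ (componentwise order on sorted tuples), are mutually inverse: ∑_{K} (-1)^{∑I - ∑K} s_{I,K} s_{K,J} = δ_{I,J}. -/
/-!
With `N = ∑ I`, let `A` be the `r × (N+1)` matrix `A k x = (-1)^(i_k + x) C(i_k, x)` and `B` the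
`(N+1) × r` matrix `B x l = C(x, j_l)`. Binomial inversion makes `A * B` the `0/1` matrix
`[i_k = j_l]`, whose determinant is `δ_{I,J}` because `I` and `J` are increasing. Cauchy–Binet
expands `det (A * B)` over the increasing `K`, and the sign `(-1)^(∑I + ∑K)` factors out of the
rows and columns of the minor of `A` at `K`.
-/

open Finset Matrix Function Equiv

theorem sum_range_neg_one_pow_mul_choose_mul_choose {i N : ℕ} (j : ℕ) (hiN : i ≤ N) :
    ∑ x ∈ range (N + 1), (-1 : ℤ) ^ (i + x) * i.choose x * x.choose j =
      if i = j then 1 else 0 := by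
  have hsupport : ∑ x ∈ range (N + 1), (-1 : ℤ) ^ (i + x) * i.choose x * x.choose j =
      ∑ x ∈ Ico j (i + 1), (-1 : ℤ) ^ (i + x) * i.choose x * x.choose j := by
    refine (sum_subset (fun x hx => ?_) fun x _ hx => ?_).symm
    · simp only [mem_Ico, mem_range] at hx ⊢; omega
    · rcases lt_or_ge x j with hxj | hjx
      · simp [Nat.choose_eq_zero_of_lt hxj]
      · simp only [mem_Ico, not_and, not_lt] at hx
        simp [Nat.choose_eq_zero_of_lt (show i < x by have := hx hjx; omega)]
  rw [hsupport, sum_Ico_eq_sum_range]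
  rcases lt_or_ge i j with hij | hji
  · simp [Nat.sub_eq_zero_of_le hij, hij.ne]
  have hterm : ∀ t ∈ range (i + 1 - j),
      (-1 : ℤ) ^ (i + (j + t)) * i.choose (j + t) * (j + t).choose j =
        (-1) ^ (i + j) * i.choose j * ((-1) ^ t * (i - j).choose t) := by
    intro t _
    have h : (i.choose (j + t) : ℤ) * (j + t).choose j = i.choose j * (i - j).choose t := by
      have h := Nat.choose_mul (n := i) (Nat.le_add_right j t)
      rw [Nat.add_sub_cancel_left] at h
      exact_mod_cast h
    rw [← add_assoc, pow_add]
    linear_combination (-1 : ℤ) ^ (i + j) * (-1) ^ t * h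
  rw [sum_congr rfl hterm, ← mul_sum, show i + 1 - j = i - j + 1 by omega,
    Int.alternating_sum_range_choose]
  rcases eq_or_ne i j with rfl | hij
  · simp [Even.neg_one_pow ⟨i, rfl⟩]
  · rw [if_neg (by omega), if_neg hij, mul_zero]

theorem Matrix.det_mul_eq_sum_det_submatrix_mul_prod {m n R : Type*} [Fintype m] [DecidableEq m]
    [Fintype n] [CommRing R] (A : Matrix m n R) (B : Matrix n m R) :
    (A * B).det = ∑ p : m → n, (A.submatrix id p).det * ∏ i, B (p i) i := by
  simp only [det_apply', mul_apply, prod_univ_sum, mul_sum, sum_mul, Fintype.piFinset_univ]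
  rw [sum_comm]
  refine sum_congr rfl fun p _ => sum_congr rfl fun σ _ => ?_
  simp only [submatrix_apply, id_eq, prod_mul_distrib, mul_assoc]

theorem Matrix.det_submatrix_eq_zero_of_not_injective {m n R : Type*} [Fintype m] [DecidableEq m]
    [CommRing R] (A : Matrix m n R) {p : m → n} (hp : ¬Injective p) :
    (A.submatrix id p).det = 0 := by
  obtain ⟨a, b, hab, hne⟩ : ∃ a b, p a = p b ∧ a ≠ b := by
    simpa [Injective] using hp
  exact det_zero_of_column_eq hne fun k => by simp [hab]

/-- An injective tuple is uniquely `g ∘ σ` with `g` strictly increasing: `g` is the sorted tuple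
and `σ` the inverse of the sorting permutation. -/
theorem Fin.sum_injective_eq_sum_strictMono_sum_perm {r : ℕ} {α M : Type*} [Fintype α]
    [LinearOrder α] [AddCommMonoid M] (f : (Fin r → α) → M) :
    ∑ p : Fin r → α with Injective p, f p =
      ∑ g : Fin r → α with StrictMono g, ∑ σ : Perm (Fin r), f (g ∘ σ) := by
  rw [← sum_product']
  have hsort {g : Fin r → α} (hg : StrictMono g) (σ : Perm (Fin r)) :
      (g ∘ σ) ∘ Tuple.sort (g ∘ σ) = g := by
    rw [Tuple.comp_perm_comp_sort_eq_comp_sort, Tuple.sort_eq_refl_iff_monotone.2 hg.monotone]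
    rfl
  symm
  refine sum_nbij' (fun gσ => gσ.1 ∘ gσ.2) (fun p => (p ∘ Tuple.sort p, (Tuple.sort p)⁻¹))
    ?_ ?_ ?_ ?_ fun _ _ => rfl
  · rintro ⟨g, σ⟩ h
    simp only [mem_product, mem_filter, mem_univ, true_and, and_true] at h ⊢
    exact h.injective.comp σ.injective
  · intro p hp
    simp only [mem_product, mem_filter, mem_univ, true_and, and_true] at hp ⊢
    exact (Tuple.monotone_sort p).strictMono_of_injective (hp.comp (Tuple.sort p).injective)
  · rintro ⟨g, σ⟩ h
    simp only [mem_product, mem_filter, mem_univ, true_and, and_true] at h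
    exact Prod.ext (hsort h σ) <|
      inv_eq_of_mul_eq_one_left (Equiv.ext fun i => h.injective (congrFun (hsort h σ) i))
  · intro p _
    ext i
    simp

theorem Matrix.det_mul_eq_sum_strictMono {r : ℕ} {n R : Type*} [Fintype n] [LinearOrder n]
    [CommRing R] (A : Matrix (Fin r) n R) (B : Matrix n (Fin r) R) :
    (A * B).det =
      ∑ g : Fin r → n with StrictMono g, (A.submatrix id g).det * (B.submatrix g id).det := by
  rw [det_mul_eq_sum_det_submatrix_mul_prod,
    ← sum_filter_of_ne (p := fun p : Fin r → n => Injective p) fun p _ h => ?_,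
    Fin.sum_injective_eq_sum_strictMono_sum_perm]
  · refine sum_congr rfl fun g _ => ?_
    rw [det_apply' (B.submatrix g id), mul_sum]
    refine sum_congr rfl fun σ _ => ?_
    rw [show A.submatrix id (g ∘ σ) = (A.submatrix id g).submatrix id σ from rfl,
      det_permute', mul_assoc, mul_left_comm]
    rfl
  · by_contra hp
    exact h (by rw [det_submatrix_eq_zero_of_not_injective A hp, zero_mul])

theorem Matrix.det_of_ite_apply_eq_apply {r : ℕ} {α R : Type*} [LinearOrder α] [CommRing R]
    {I J : Fin r → α} (hI : StrictMono I) (hJ : StrictMono J) :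
    (of fun k l => if I k = J l then (1 : R) else 0).det = if I = J then 1 else 0 := by
  split_ifs with h
  · subst h
    rw [show (of fun k l => if I k = I l then (1 : R) else 0) = 1 by
      ext k l
      simp [one_apply, hI.injective.eq_iff], det_one]
  · have hrange : Set.range I ≠ Set.range J := fun hr => h ((hI.range_inj hJ).mp hr)
    by_cases hsub : Set.range I ⊆ Set.range J
    · obtain ⟨_, ⟨l, rfl⟩, hl⟩ := Set.not_subset.mp fun h' => hrange (hsub.antisymm h')
      exact det_eq_zero_of_column_eq_zero l fun k => if_neg fun hk => hl ⟨k, hk⟩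
    · obtain ⟨_, ⟨k, rfl⟩, hk⟩ := Set.not_subset.mp hsub
      exact det_eq_zero_of_row_eq_zero k fun l => if_neg fun hl => hk ⟨l, hl.symm⟩

theorem Matrix.det_of_neg_one_pow_add_mul {m R : Type*} [Fintype m] [DecidableEq m] [CommRing R]
    (a b : m → ℕ) (M : Matrix m m R) :
    (of fun k l => (-1 : R) ^ (a k + b l) * M k l).det =
      (-1) ^ (∑ k, a k + ∑ l, b l) * M.det := by
  calc (of fun k l => (-1 : R) ^ (a k + b l) * M k l).det
      = (of fun k l => (-1 : R) ^ a k * of (fun k l => (-1 : R) ^ b l * M k l) k l).det := by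
        simp only [pow_add, of_apply, mul_assoc]
    _ = (-1) ^ (∑ k, a k + ∑ l, b l) * M.det := by
        rw [det_mul_column, det_mul_row, prod_pow_eq_pow_sum, prod_pow_eq_pow_sum, pow_add,
          mul_assoc]

theorem sum_filter_strictMono_piFinset_range {r n : ℕ} {M : Type*} [AddCommMonoid M]
    (f : (Fin r → ℕ) → M) :
    ∑ K ∈ (Fintype.piFinset fun _ : Fin r => range n).filter
        (fun K => ∀ k l : Fin r, k < l → K k < K l), f K =
      ∑ g : Fin r → Fin n with StrictMono g, f (Fin.val ∘ g) := by
  symm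
  refine sum_bij (fun g _ => Fin.val ∘ g) (fun g hg => ?_) (fun g _ g' _ h => ?_)
    (fun K hK => ?_) fun _ _ => rfl
  · simp only [mem_filter, mem_univ, true_and, Fintype.mem_piFinset, mem_range] at hg ⊢
    exact ⟨fun k => (g k).isLt, fun k l hkl => hg hkl⟩
  · exact funext fun k => Fin.ext (congrFun h k)
  · simp only [mem_filter, Fintype.mem_piFinset, mem_range] at hK
    refine ⟨fun k => ⟨K k, hK.1 k⟩, ?_, rfl⟩
    simp only [mem_filter, mem_univ, true_and]
    exact fun k l hkl => hK.2 k l hkl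

/-- The matrices `(s_{I,J})` and `((-1)^{∑I-∑J} s_{I,J})`, where
`s_{I,J} = det(C(i_k, j_l))`, are mutually inverse:
`∑_K (-1)^{∑I-∑K} s_{I,K} s_{K,J} = δ_{I,J}`.  The sum runs over all strictly increasing
size-`r` tuples `K`; only those with `K ≤ I` componentwise contribute (otherwise
`s_{I,K} = 0`), so the sum may be taken over `K` with entries `≤ ∑I`.
(Since `∑K ≤ ∑I` for nonzero terms, `(-1)^{∑I-∑K} = (-1)^{∑I+∑K}`.) -/
theorem stmt11 (r : ℕ) (I J : Fin r → ℕ) (hI : StrictMono I) (hJ : StrictMono J) :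
    ∑ K ∈ (Fintype.piFinset fun _ : Fin r => Finset.range ((∑ k, I k) + 1)).filter
        (fun K => ∀ k l : Fin r, k < l → K k < K l),
      (-1 : ℤ) ^ ((∑ k, I k) + ∑ k, K k) *
        Matrix.det (Matrix.of fun k l : Fin r => ((I k).choose (K l) : ℤ)) *
        Matrix.det (Matrix.of fun k l : Fin r => ((K k).choose (J l) : ℤ))
      = if I = J then 1 else 0 := by
  set N := ∑ k, I k
  let A : Matrix (Fin r) (Fin (N + 1)) ℤ := of fun k x => (-1) ^ (I k + x) * (I k).choose x
  let B : Matrix (Fin (N + 1)) (Fin r) ℤ := of fun x l => (x : ℕ).choose (J l)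
  have hAB : A * B = of fun k l => if I k = J l then 1 else 0 := by
    ext k l
    rw [mul_apply, of_apply, ← sum_range_neg_one_pow_mul_choose_mul_choose (J l)
      (single_le_sum (fun _ _ => Nat.zero_le _) (mem_univ k)), ← Fin.sum_univ_eq_sum_range]
    rfl
  rw [sum_filter_strictMono_piFinset_range, ← det_of_ite_apply_eq_apply hI hJ, ← hAB,
    det_mul_eq_sum_strictMono]
  refine sum_congr rfl fun g _ => ?_
  have hA : (A.submatrix id g).det =
      (-1) ^ (N + ∑ l, (g l : ℕ)) * (of fun k l => ((I k).choose (g l) : ℤ)).det :=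
    det_of_neg_one_pow_add_mul I (fun l => g l) _
  rw [hA]
  rfl
end

section
/- With s_{I,J} = det(C(i_k, j_l)) for sets I, J of size r, the identity s_{λ(I)}(x_1+1, ..., x_r+1) = ∑_{J ≤ I} s_{I,J} * s_{λ(J)}(x_1, ..., x_r) holds, where s_λ denotes the Schur polynomial and λ(I) = (i_r - (r-1), ..., i_2 - 1, i_1) for I = {i_1 < ... < i_r}. -/
open scoped BigOperators

/-- `h` with integer index (zero for negative index). -/
def hsymZ (r : ℕ) (m : ℤ) (x : Fin r → ℚ) : ℚ :=
  if 0 ≤ m then hsym r m.toNat x else 0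

/-- The Schur polynomial `s_λ(x_1,…,x_r)` via the Jacobi–Trudi determinant
`s_λ = det(h_{λ_k + l - k})_{1 ≤ k,l ≤ r}`. -/
def schur (r : ℕ) (lam : Fin r → ℕ) (x : Fin r → ℚ) : ℚ :=
  Matrix.det (Matrix.of fun k l : Fin r =>
    hsymZ r ((lam k : ℤ) + (l : ℕ) - (k : ℕ)) x)

/-- The partition `λ(I) = (i_r - (r-1), …, i_2 - 1, i_1)` associated to a strictly
increasing tuple `I`. -/
def lambdaOf (r : ℕ) (I : Fin r → ℕ) : Fin r → ℕ :=
  fun k => I k.rev - (k.rev : ℕ)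

/-!
Multiplying the Jacobi–Trudi determinant `det (h_{i_k - m})` by the Vandermonde determinant
gives the alternant `det (x_j ^ i_k)`: since `∏ i, (1 - x_i t)⁻¹ = ∑ h_n t ^ n`, the matrix
`(h_{i_k - m})` times the matrix of coefficients of `∏_{i ≠ j} (1 - x_i t)` is `(x_j ^ i_k)`.
At `x + 1` the binomial theorem factors `((x_j + 1) ^ i_k)` as `(C(i_k, n)) * (x_j ^ n)`, so
Cauchy–Binet expands the alternant as a sum over `J`, while the Vandermonde determinant is
invariant under the shift. Cancelling it in `ℤ[x_1, …, x_r]`, where it is not a zero divisor,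
and specialising gives the identity. The terms with `J ≰ I` vanish because `(C(i_k, j_l))`
then has a zero block that every permutation meets.
-/

open Finset Matrix

noncomputable section

variable {R : Type*} [CommRing R] {r : ℕ}

-- `hsym` and `hsymZ` over an arbitrary commutative ring (definitionally equal to them over `ℚ`).
def completeSym (r d : ℕ) (x : Fin r → R) : R :=
  ∑ c ∈ (Fintype.piFinset fun _ : Fin r => range (d + 1)).filter (fun c => ∑ i, c i = d),
    ∏ i, x i ^ c i

def completeSymZ (r : ℕ) (m : ℤ) (x : Fin r → R) : R :=
  if 0 ≤ m then completeSym r m.toNat x else 0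

theorem completeSym_zero (x : Fin r → R) : completeSym r 0 x = 1 := by
  rw [completeSym, sum_eq_single_of_mem (fun _ => 0) (by simp)]
  · simp
  · intro c hc hne
    simp only [mem_filter, sum_eq_zero_iff, mem_univ, true_implies] at hc
    exact absurd (funext hc.2) hne

theorem completeSymZ_natCast_sub (x : Fin r → R) (n m : ℕ) :
    completeSymZ r ((n : ℤ) - m) x = if m ≤ n then completeSym r (n - m) x else 0 := by
  unfold completeSymZ
  by_cases h : m ≤ n
  · rw [if_pos (by omega), if_pos h, show ((n : ℤ) - m).toNat = n - m by omega]
  · rw [if_neg (by omega), if_neg h]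

theorem one_sub_C_mul_X_mul_mk_pow (a : R) :
    (1 - PowerSeries.C a * PowerSeries.X) * PowerSeries.mk (a ^ ·) = 1 := by
  simpa [mul_comm, PowerSeries.rescale_mk, PowerSeries.rescale_X] using
    congrArg (PowerSeries.rescale a) (PowerSeries.mk_one_mul_one_sub_eq_one R)

theorem coeff_prod_mk_pow (x : Fin r → R) (d : ℕ) :
    PowerSeries.coeff d (∏ i, PowerSeries.mk (x i ^ ·)) = completeSym r d x := by
  classical
  rw [PowerSeries.coeff_prod, completeSym]
  refine sum_nbij' (fun l i => l i) (fun c => Finsupp.equivFunOnFinite.symm c) ?_ ?_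
    (fun _ _ => Finsupp.ext fun _ => rfl) (fun _ _ => rfl) (fun _ _ => by simp)
  · intro l hl
    rw [mem_finsuppAntidiag] at hl
    simp only [mem_filter, Fintype.mem_piFinset, mem_range]
    refine ⟨fun i => Nat.lt_succ_of_le ?_, hl.1⟩
    exact hl.1 ▸ single_le_sum (fun j _ => Nat.zero_le (l j)) (mem_univ i)
  · intro c hc
    simp only [mem_filter] at hc
    simp [mem_finsuppAntidiag, hc.2]

def prodOneSubErase (x : Fin r → R) (j : Fin r) : Polynomial R :=
  ∏ i ∈ univ.erase j, (1 - Polynomial.C (x i) * Polynomial.X)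

theorem natDegree_prodOneSubErase_lt (x : Fin r → R) (j : Fin r) :
    (prodOneSubErase x j).natDegree < r := by
  have hdeg : (prodOneSubErase x j).natDegree ≤ #(univ.erase j) := by
    refine (Polynomial.natDegree_prod_le _ _).trans ?_
    refine (sum_le_sum (g := fun _ => 1) fun i _ => ?_).trans (by simp)
    compute_degree
  rw [card_erase_of_mem (mem_univ j), card_univ, Fintype.card_fin] at hdeg
  have := j.pos
  omega

theorem prodOneSubErase_mul_prod_mk_pow (x : Fin r → R) (j : Fin r) :
    (prodOneSubErase x j : PowerSeries R) * ∏ i, PowerSeries.mk (x i ^ ·) =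
      PowerSeries.mk (x j ^ ·) := by
  rw [← mul_prod_erase univ _ (mem_univ j), mul_left_comm, prodOneSubErase,
    ← Polynomial.coeToPowerSeries.ringHom_apply, map_prod, ← prod_mul_distrib]
  simp [one_sub_C_mul_X_mul_mk_pow]

theorem sum_completeSymZ_mul_coeff_prodOneSubErase (x : Fin r → R) (j : Fin r) (n : ℕ) :
    ∑ m : Fin r, completeSymZ r ((n : ℤ) - (m : ℕ)) x * (prodOneSubErase x j).coeff m =
      x j ^ n := by
  set P := prodOneSubErase x j
  have hP : (P : PowerSeries R) =
      ∑ m : Fin r, PowerSeries.C (P.coeff m) * PowerSeries.X ^ (m : ℕ) := by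
    conv_lhs => rw [P.as_sum_range' r (natDegree_prodOneSubErase_lt x j),
      ← Polynomial.coeToPowerSeries.ringHom_apply, map_sum]
    rw [← Fin.sum_univ_eq_sum_range (fun m => Polynomial.coeToPowerSeries.ringHom
      (Polynomial.monomial m (P.coeff m)))]
    simp [← Polynomial.C_mul_X_pow_eq_monomial]
  have h := congrArg (PowerSeries.coeff n) (prodOneSubErase_mul_prod_mk_pow x j)
  rw [hP, sum_mul, map_sum] at h
  simpa [mul_assoc, PowerSeries.coeff_X_pow_mul', coeff_prod_mk_pow, completeSymZ_natCast_sub,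
    mul_comm] using h

def hMatrix (I : Fin r → ℕ) (x : Fin r → R) : Matrix (Fin r) (Fin r) R :=
  of fun k m => completeSymZ r ((I k : ℤ) - (m : ℕ)) x

def powMatrix (I : Fin r → ℕ) (x : Fin r → R) : Matrix (Fin r) (Fin r) R :=
  of fun k j => x j ^ I k

theorem hMatrix_mul_coeff_prodOneSubErase (I : Fin r → ℕ) (x : Fin r → R) :
    hMatrix I x * of (fun m j : Fin r => (prodOneSubErase x j).coeff m) = powMatrix I x := by
  ext k j
  exact sum_completeSymZ_mul_coeff_prodOneSubErase x j (I k)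

theorem det_hMatrix_val (x : Fin r → R) : (hMatrix (fun k => (k : ℕ)) x).det = 1 := by
  rw [det_of_isLowerTriangular _ fun k m hkm => ?_]
  · simp [hMatrix, completeSymZ_natCast_sub, completeSym_zero]
  · simp [hMatrix, completeSymZ_natCast_sub, (OrderDual.toDual_lt_toDual.mp hkm).not_ge]

theorem det_hMatrix_mul_det_vandermonde (I : Fin r → ℕ) (x : Fin r → R) :
    (hMatrix I x).det * (vandermonde x).det = (powMatrix I x).det := by
  have hE : (of fun m j : Fin r => (prodOneSubErase x j).coeff m).det = (vandermonde x).det := by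
    rw [← det_transpose (vandermonde x), ← one_mul (det _), ← det_hMatrix_val x, ← det_mul,
      hMatrix_mul_coeff_prodOneSubErase]
    rfl
  rw [← hE, ← det_mul, hMatrix_mul_coeff_prodOneSubErase]

section CauchyBinet

variable {α : Type*} [LinearOrder α]

theorem sum_piFinset_eq_sum_strictMono_sum_perm {M : Type*} [AddCommMonoid M] (s : Finset α)
    (g : (Fin r → α) → M) (hg : ∀ p, ¬ Function.Injective p → g p = 0) :
    ∑ p ∈ Fintype.piFinset fun _ : Fin r => s, g p =
      ∑ J ∈ (Fintype.piFinset fun _ : Fin r => s).filter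
          (fun J => ∀ k l : Fin r, k < l → J k < J l),
        ∑ σ : Equiv.Perm (Fin r), g (J ∘ σ) := by
  classical
  rw [← sum_filter_of_ne (p := Function.Injective) fun p _ hp => not_imp_comm.mp (hg p) hp,
    ← sum_product']
  symm
  refine sum_nbij' (fun q => q.1 ∘ q.2) (fun p => (p ∘ Tuple.sort p, (Tuple.sort p)⁻¹))
    ?_ ?_ ?_ ?_ (fun _ _ => rfl)
  · rintro ⟨J, σ⟩ hq
    simp only [mem_product, mem_filter, Fintype.mem_piFinset] at hq ⊢
    exact ⟨fun k => hq.1.1 _,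
      (StrictMono.injective fun a b h => hq.1.2 a b h).comp σ.injective⟩
  · intro p hp
    simp only [mem_product, mem_filter, Fintype.mem_piFinset] at hp ⊢
    have hsorted := (Tuple.monotone_sort p).strictMono_of_injective
      (hp.2.comp (Tuple.sort p).injective)
    exact ⟨⟨fun k => hp.1 _, fun a b h => hsorted h⟩, mem_univ _⟩
  · rintro ⟨J, σ⟩ hq
    simp only [mem_product, mem_filter] at hq
    have hJ : StrictMono J := fun a b h => hq.1.2 a b h
    have hsorted : (J ∘ σ) ∘ Tuple.sort (J ∘ σ) = J := by
      rw [Tuple.comp_perm_comp_sort_eq_comp_sort,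
        Tuple.sort_eq_refl_iff_monotone.mpr hJ.monotone]
      rfl
    have hσ : σ * Tuple.sort (J ∘ σ) = 1 :=
      Equiv.ext fun k => hJ.injective (congrFun hsorted k)
    exact Prod.ext hsorted (inv_eq_of_mul_eq_one_left hσ)
  · intro p _
    ext k
    simp

theorem det_of_sum_mul_eq_sum_strictMono (s : Finset α) (A : Fin r → α → R)
    (B : α → Fin r → R) :
    (of fun k l => ∑ a ∈ s, A k a * B a l).det =
      ∑ J ∈ (Fintype.piFinset fun _ : Fin r => s).filter
          (fun J => ∀ k l : Fin r, k < l → J k < J l),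
        (of fun k l => A k (J l)).det * (of fun k l => B (J k) l).det := by
  classical
  have hexpand : (of fun k l => ∑ a ∈ s, A k a * B a l).det =
      ∑ p ∈ Fintype.piFinset fun _ : Fin r => s,
        (∏ k, A k (p k)) * (of fun k l => B (p k) l).det := by
    have hrows : (of fun k l => ∑ a ∈ s, A k a * B a l) = fun k => ∑ a ∈ s, A k a • B a := by
      ext k l
      simp
    rw [hrows]
    refine (detRowAlternating.toMultilinearMap.map_sum_finset (fun k a => A k a • B a)
      (fun _ => s)).trans (sum_congr rfl fun p _ => ?_)
    rw [MultilinearMap.map_smul_univ]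
    rfl
  rw [hexpand, sum_piFinset_eq_sum_strictMono_sum_perm s _ fun p hp => ?_]
  · refine sum_congr rfl fun J _ => ?_
    rw [← det_transpose (of fun k l => A k (J l)), det_apply', sum_mul]
    refine sum_congr rfl fun σ _ => ?_
    have hperm : (of fun k l => B ((J ∘ σ) k) l).det =
        Equiv.Perm.sign σ * (of fun k l => B (J k) l).det :=
      det_permute σ (of fun k l => B (J k) l)
    rw [hperm]
    simp only [transpose_apply, of_apply, Function.comp_apply]
    ring
  · obtain ⟨a, b, hab, hne⟩ := Function.not_injective_iff.mp hp
    exact mul_eq_zero_of_right _ (det_zero_of_row_eq hne (funext fun l => by simp [hab]))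

end CauchyBinet

theorem det_powMatrix_add_one {N : ℕ} (I : Fin r → ℕ) (hN : ∀ k, I k < N) (x : Fin r → R) :
    (powMatrix I fun i => x i + 1).det =
      ∑ J ∈ (Fintype.piFinset fun _ : Fin r => range N).filter
          (fun J => ∀ k l : Fin r, k < l → J k < J l),
        (of fun k l => ((I k).choose (J l) : R)).det * (powMatrix J x).det := by
  have hbinom : (powMatrix I fun i => x i + 1) =
      of fun k l => ∑ n ∈ range N, ((I k).choose n : R) * x l ^ n := by
    ext k l
    rw [powMatrix, of_apply, of_apply, add_pow,
      sum_subset (range_subset_range.mpr (hN k)) fun n _ hn => ?_]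
    · exact sum_congr rfl fun n _ => by ring
    · rw [Nat.choose_eq_zero_of_lt (by simpa using hn), Nat.cast_zero, mul_zero]
  rw [hbinom, det_of_sum_mul_eq_sum_strictMono]
  rfl

theorem det_choose_eq_zero {I J : Fin r → ℕ} (hI : Monotone I) (hJ : Monotone J) {m : Fin r}
    (hm : I m < J m) : (of fun k l => ((I k).choose (J l) : R)).det = 0 := by
  rw [det_apply']
  refine sum_eq_zero fun σ _ => mul_eq_zero_of_right _ ?_
  -- the entries in rows `≤ m` and columns `≥ m` vanish, and every permutation meets them
  obtain ⟨i, hmi, hσi⟩ : ∃ i, m ≤ i ∧ σ i ≤ m := by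
    by_contra! h
    have hcard := card_le_card_of_injOn σ (fun i hi => mem_Ioi.mpr (h i (mem_Ici.mp hi)))
      σ.injective.injOn
    simp only [Fin.card_Ici, Fin.card_Ioi] at hcard
    omega
  refine prod_eq_zero (mem_univ i) ?_
  rw [of_apply, Nat.choose_eq_zero_of_lt ((hI hσi).trans_lt (hm.trans_le (hJ hmi))),
    Nat.cast_zero]

theorem det_hMatrix_add_one_mul_det_vandermonde {N : ℕ} (I : Fin r → ℕ) (hN : ∀ k, I k < N)
    (x : Fin r → R) :
    (hMatrix I fun i => x i + 1).det * (vandermonde x).det =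
      (∑ J ∈ (Fintype.piFinset fun _ : Fin r => range N).filter
          (fun J => ∀ k l : Fin r, k < l → J k < J l),
        (of fun k l => ((I k).choose (J l) : R)).det * (hMatrix J x).det) *
        (vandermonde x).det := by
  rw [sum_mul]
  simp_rw [mul_assoc, det_hMatrix_mul_det_vandermonde]
  rw [← det_powMatrix_add_one I hN, ← det_hMatrix_mul_det_vandermonde, det_vandermonde_add]

theorem map_completeSymZ {S : Type*} [CommRing S] (φ : R →+* S) (m : ℤ) (x : Fin r → R) :
    φ (completeSymZ r m x) = completeSymZ r m (φ ∘ x) := by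
  simp only [completeSymZ, completeSym, apply_ite φ, map_sum, map_prod, map_pow, map_zero,
    Function.comp_apply]

theorem map_det_hMatrix {S : Type*} [CommRing S] (φ : R →+* S) (I : Fin r → ℕ) (x : Fin r → R) :
    φ (hMatrix I x).det = (hMatrix I (φ ∘ x)).det := by
  rw [RingHom.map_det]
  congr 1
  ext k m
  exact map_completeSymZ φ _ x

theorem det_hMatrix_add_one_eq_sum_strictMono {N : ℕ} (I : Fin r → ℕ) (hN : ∀ k, I k < N)
    (x : Fin r → R) :
    (hMatrix I fun i => x i + 1).det =
      ∑ J ∈ (Fintype.piFinset fun _ : Fin r => range N).filter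
          (fun J => ∀ k l : Fin r, k < l → J k < J l),
        (of fun k l => ((I k).choose (J l) : R)).det * (hMatrix J x).det := by
  have hX : (vandermonde (MvPolynomial.X : Fin r → MvPolynomial (Fin r) ℤ)).det ≠ 0 :=
    det_vandermonde_ne_zero_iff.mpr MvPolynomial.X_injective
  have hgeneric := congrArg (MvPolynomial.eval₂Hom (Int.castRingHom R) x)
    (mul_right_cancel₀ hX (det_hMatrix_add_one_mul_det_vandermonde I hN MvPolynomial.X))
  have hφX : MvPolynomial.eval₂Hom (Int.castRingHom R) x ∘ MvPolynomial.X = x :=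
    funext fun i => MvPolynomial.eval₂_X _ _ _
  have hφ1 : (MvPolynomial.eval₂Hom (Int.castRingHom R) x ∘ fun i => MvPolynomial.X i + 1) =
      fun i => x i + 1 := by
    ext i
    simp
  rw [map_det_hMatrix, hφ1, map_sum] at hgeneric
  rw [hgeneric]
  refine sum_congr rfl fun J _ => ?_
  rw [map_mul, map_det_hMatrix, hφX, RingHom.map_det]
  congr 2
  ext k l
  simp

theorem det_hMatrix_add_one {N : ℕ} {I : Fin r → ℕ} (hI : Monotone I) (hN : ∀ k, I k < N)
    (x : Fin r → R) :
    (hMatrix I fun i => x i + 1).det =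
      ∑ J ∈ (Fintype.piFinset fun _ : Fin r => range N).filter
          (fun J => (∀ k l : Fin r, k < l → J k < J l) ∧ ∀ k, J k ≤ I k),
        (of fun k l => ((I k).choose (J l) : R)).det * (hMatrix J x).det := by
  rw [det_hMatrix_add_one_eq_sum_strictMono I hN, ← filter_filter]
  refine (sum_filter_of_ne fun J hJ hne => ?_).symm
  by_contra! hle
  obtain ⟨m, hm⟩ := hle
  have hJ : StrictMono J := fun a b h => (mem_filter.mp hJ).2 a b h
  exact hne (by rw [det_choose_eq_zero hI hJ.monotone hm, zero_mul])

theorem val_le_apply_of_strictMono {K : Fin r → ℕ} (hK : StrictMono K) (k : Fin r) :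
    (k : ℕ) ≤ K k := by
  simpa using card_le_card_of_injOn K (fun i hi => mem_Iio.mpr (hK (mem_Iio.mp hi)))
    hK.injective.injOn

theorem schur_lambdaOf {K : Fin r → ℕ} (hK : StrictMono K) (x : Fin r → ℚ) :
    schur r (lambdaOf r K) x = (hMatrix K x).det := by
  rw [← det_submatrix_equiv_self Fin.revPerm, schur]
  congr 1
  ext k l
  have hk := val_le_apply_of_strictMono hK k.rev
  simp only [submatrix_apply, of_apply, hMatrix, lambdaOf, Fin.revPerm_apply, Fin.val_rev] at hk ⊢
  exact congrArg (fun m => completeSymZ r m x) (by omega)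

end

/-- `s_{λ(I)}(x_1+1,…,x_r+1) = ∑_{J ≤ I} s_{I,J} · s_{λ(J)}(x_1,…,x_r)`, where
`s_{I,J} = det(C(i_k, j_l))` and the sum runs over strictly increasing `J` with
`J ≤ I` componentwise. -/
theorem stmt12 (r : ℕ) (I : Fin r → ℕ) (hI : StrictMono I) (x : Fin r → ℚ) :
    schur r (lambdaOf r I) (fun i => x i + 1)
      = ∑ J ∈ (Fintype.piFinset fun _ : Fin r => Finset.range ((∑ k, I k) + 1)).filter
            (fun J => (∀ k l : Fin r, k < l → J k < J l) ∧ ∀ k, J k ≤ I k),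
          Matrix.det (Matrix.of fun k l : Fin r => ((I k).choose (J l) : ℚ)) *
            schur r (lambdaOf r J) x := by
  have hN : ∀ k, I k < (∑ k, I k) + 1 := fun k =>
    Nat.lt_succ_of_le (single_le_sum (fun _ _ => Nat.zero_le _) (mem_univ k))
  rw [schur_lambdaOf hI, det_hMatrix_add_one hI.monotone hN]
  refine sum_congr rfl fun J hJ => ?_
  rw [schur_lambdaOf fun a b h => (mem_filter.mp hJ).2.1 a b h]
end

section
/- Jacobi's theorem on minors of the adjugate: For an n×n matrix A over a commutative ring and subsets I, J ⊆ {1,...,n} with #I = #J = k, det((A^C)_{I,J}) = det(A)^{k-1} * det(A_{[n]∖I, [n]∖J}) (up to the appropriate sign ε(I)ε(J)), where A^C is the cofactor/adjugate-transpose matrix. -/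
/-!
Let `σ, τ : Fin k ⊕ Fin (n - k) ≃ Fin n` enumerate `I` then `Iᶜ`, and `J` then `Jᶜ`, in increasing
order. Since `A * adj A = det A • 1`, multiplying `A_{σ,τ}` on the right by the block matrix
`[[(adj A)_{J,I}, 0], [(adj A)_{Jᶜ,I}, 1]]` gives a block upper triangular matrix with diagonal
blocks `det A • 1` and `A_{Iᶜ,Jᶜ}`, so `det A_{σ,τ} * det (adj A)_{J,I} = det A ^ k * det A_{Iᶜ,Jᶜ}`.
Moreover `det A_{σ,τ} = ε(I) ε(J) det A`: the inversions of the shuffle listing `I` before `Iᶜ`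
are the pairs `(i, j) ∈ I × Iᶜ` with `j < i`, and the `p`-th smallest element `i_p` of `I`
(counting from `0`) exceeds exactly `i_p - p` elements of `Iᶜ`. Cancelling `det A` is legitimate for the generic matrix over `ℤ[X_ij]`, whose
determinant is nonzero, and the identity then specializes to every matrix over a commutative ring.
-/

open Equiv Equiv.Perm Finset Matrix

namespace Equiv.Perm

theorem sign_eq_signAux {n : ℕ} (f : Perm (Fin n)) : sign f = signAux f := by
  refine swap_induction_on f (by simp [signAux_one]) fun f x y hxy ih => ?_
  rw [sign_mul, signAux_mul, sign_swap hxy, signAux_swap hxy, ih]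

theorem sign_eq_neg_one_pow_card_inversions {n : ℕ} (f : Perm (Fin n)) :
    sign f = (-1) ^ #{z : Fin n × Fin n | z.1 < z.2 ∧ f z.2 < f z.1} := by
  rw [sign_eq_signAux, signAux, prod_ite, prod_const_one, mul_one, prod_const]
  congr 1
  refine card_bij' (fun a _ => (a.2, a.1)) (fun z _ => ⟨z.2, z.1⟩) ?_ ?_ (by simp) (by simp)
  · simp only [mem_filter, mem_finPairsLT, mem_univ, true_and, and_imp]
    exact fun a h hle => ⟨h, lt_of_le_of_ne hle (f.injective.ne h.ne')⟩
  · simp only [mem_filter, mem_finPairsLT, mem_univ, true_and, and_imp]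
    exact fun z h hlt => ⟨h, hlt.le⟩

end Equiv.Perm

namespace Finset

variable {n k m : ℕ}

theorem card_filter_orderEmbOfFin_lt (s : Finset (Fin n)) (h : #s = k) (i : Fin n) :
    #{q : Fin k | s.orderEmbOfFin h q < i} = #{j ∈ s | j < i} := by
  conv_rhs => rw [← map_orderEmbOfFin_univ s h]
  rw [filter_map, card_map]
  rfl

theorem card_filter_compl_lt_orderEmbOfFin_add (I : Finset (Fin n)) (hI : #I = k)
    (hIc : #Iᶜ = m) (p : Fin k) :
    #{q : Fin m | Iᶜ.orderEmbOfFin hIc q < I.orderEmbOfFin hI p} + p = I.orderEmbOfFin hI p := by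
  have hI_lt : #{j ∈ I | j < I.orderEmbOfFin hI p} = p := by
    rw [← card_filter_orderEmbOfFin_lt I hI]
    simp only [OrderEmbedding.lt_iff_lt, filter_gt_eq_Iio, Fin.card_Iio]
  rw [card_filter_orderEmbOfFin_lt, ← hI_lt, ← Fin.card_Iio, ← filter_gt_eq_Iio,
    ← card_union_of_disjoint (disjoint_filter_filter disjoint_compl_left)]
  congr 1
  ext j
  simp only [mem_union, mem_filter, mem_compl, mem_univ, true_and]
  tauto

def shufflePerm (I : Finset (Fin n)) (hI : #I = k) (hIc : #Iᶜ = m) (h : k + m = n) :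
    Perm (Fin n) :=
  (finSumFinEquiv.trans (finCongr h)).symm.trans (finSumEquivOfFinset hI hIc)

theorem card_inversions_shufflePerm (I : Finset (Fin n)) (hI : #I = k)
    (hIc : #Iᶜ = m) (h : k + m = n) :
    #{z : Fin n × Fin n | z.1 < z.2 ∧ I.shufflePerm hI hIc h z.2 < I.shufflePerm hI hIc h z.1} =
      #{w : Fin k × Fin m | Iᶜ.orderEmbOfFin hIc w.2 < I.orderEmbOfFin hI w.1} := by
  have lt_and_lt_iff_false {α : Type} [Preorder α] (x y : α) : x < y ∧ y < x ↔ False :=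
    iff_false_intro fun h => lt_asymm h.1 h.2
  set b := finSumFinEquiv.trans (finCongr h)
  have inl_lt_inl (p p' : Fin k) : b (.inl p) < b (.inl p') ↔ p < p' := by
    simp [b, (Fin.strictMono_castAdd m).lt_iff_lt]
  have inl_lt_inr (p : Fin k) (q : Fin m) : b (.inl p) < b (.inr q) := by
    simp [b, Fin.lt_def]
    omega
  have inr_lt_inr (q q' : Fin m) : b (.inr q) < b (.inr q') ↔ q < q' := by
    simp [b]
  have hπ (u : Fin k ⊕ Fin m) : I.shufflePerm hI hIc h (b u) = finSumEquivOfFinset hI hIc u := by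
    simp [shufflePerm, b]
  rw [card_filter, card_filter, ← (b.prodCongr b).sum_comp, Fintype.sum_prod_type,
    Fintype.sum_sum_type, Fintype.sum_prod_type]
  simp only [prodCongr_apply, Prod.map, hπ, Fintype.sum_sum_type, finSumEquivOfFinset_inl,
    finSumEquivOfFinset_inr, inl_lt_inl, inl_lt_inr, inr_lt_inr, (inl_lt_inr _ _).not_gt,
    OrderEmbedding.lt_iff_lt, true_and, false_and, if_false, lt_and_lt_iff_false,
    sum_const_zero, zero_add, add_zero]

theorem sign_shufflePerm (I : Finset (Fin n)) (hI : #I = k) (hIc : #Iᶜ = m) (h : k + m = n) :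
    sign (I.shufflePerm hI hIc h) = (-1) ^ (∑ i ∈ I, (i : ℕ) + ∑ p : Fin k, (p : ℕ)) := by
  have hsum : ∑ i ∈ I, (i : ℕ) =
      #{w : Fin k × Fin m | Iᶜ.orderEmbOfFin hIc w.2 < I.orderEmbOfFin hI w.1} +
        ∑ p : Fin k, (p : ℕ) :=
    calc ∑ i ∈ I, (i : ℕ) = ∑ p : Fin k, (I.orderEmbOfFin hI p : ℕ) := by
          conv_lhs => rw [← map_orderEmbOfFin_univ I hI]
          exact sum_map _ _ _
      _ = ∑ p : Fin k, (#{q : Fin m | Iᶜ.orderEmbOfFin hIc q < I.orderEmbOfFin hI p} + p) := by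
          simp only [card_filter_compl_lt_orderEmbOfFin_add]
      _ = _ := by
          rw [sum_add_distrib, card_filter, Fintype.sum_prod_type]
          simp only [card_filter]
  rw [sign_eq_neg_one_pow_card_inversions, card_inversions_shufflePerm, hsum, add_assoc,
    ← two_mul, pow_add, pow_mul]
  simp

theorem sign_symm_trans_finSumEquivOfFinset (I J : Finset (Fin n)) (hI : #I = k) (hJ : #J = k)
    (hIc : #Iᶜ = m) (hJc : #Jᶜ = m) :
    sign ((finSumEquivOfFinset hJ hJc).symm.trans (finSumEquivOfFinset hI hIc)) =
      (-1) ^ (∑ i ∈ I, (i : ℕ) + ∑ j ∈ J, (j : ℕ)) := by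
  have h : k + m = n := by rw [← hI, ← hIc, card_add_card_compl, Fintype.card_fin]
  have : (finSumEquivOfFinset hJ hJc).symm.trans (finSumEquivOfFinset hI hIc) =
      (J.shufflePerm hJ hJc h).symm.trans (I.shufflePerm hI hIc h) := by
    ext
    simp [shufflePerm]
  rw [this, sign_trans, sign_symm, sign_shufflePerm, sign_shufflePerm, ← pow_add,
    add_add_add_comm, ← two_mul, pow_add, pow_mul]
  simp

end Finset

namespace Matrix

variable {R : Type*} [CommRing R] {ι m l n : Type*} [Fintype m] [Fintype l] [Fintype n]
  [DecidableEq m] [DecidableEq l] [DecidableEq n] [Fintype ι] [DecidableEq ι]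

theorem det_submatrix_equiv_equiv (A : Matrix n n R) (σ τ : ι ≃ n) :
    (A.submatrix σ τ).det = sign (τ.symm.trans σ) * A.det := by
  have : A.submatrix σ τ = (A.submatrix (τ.symm.trans σ) id).submatrix τ τ := by
    ext i j
    simp
  rw [this, det_submatrix_equiv_self, det_permute]

theorem det_submatrix_mul_det_adjugate_submatrix (A : Matrix n n R) (σ τ : m ⊕ l ≃ n) :
    (A.submatrix σ τ).det * (A.adjugate.submatrix (τ ∘ Sum.inl) (σ ∘ Sum.inl)).det =
      A.det ^ Fintype.card m * (A.submatrix (σ ∘ Sum.inr) (τ ∘ Sum.inr)).det := by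
  set B := A.submatrix σ τ
  set C := A.adjugate.submatrix τ σ
  have hBC : B * C = A.det • 1 := by
    rw [submatrix_mul_equiv, mul_adjugate]
    exact congrArg (A.det • ·) (submatrix_one_equiv (α := R) σ)
  rw [← fromBlocks_toBlocks B, ← fromBlocks_toBlocks C, fromBlocks_multiply, ← fromBlocks_one,
    fromBlocks_smul, smul_zero, fromBlocks_inj] at hBC
  obtain ⟨h₁₁, -, h₂₁, -⟩ := hBC
  have hBD : B * fromBlocks C.toBlocks₁₁ 0 C.toBlocks₂₁ 1 =
      fromBlocks (A.det • 1) B.toBlocks₁₂ 0 B.toBlocks₂₂ := by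
    rw [← fromBlocks_toBlocks B, fromBlocks_multiply, h₁₁, h₂₁]
    simp
  have := congrArg det hBD
  rwa [det_mul, det_fromBlocks_zero₁₂, det_fromBlocks_zero₂₁, det_one, mul_one, det_smul,
    det_one, mul_one] at this

theorem det_adjugate_submatrix_inl [Nonempty m] (A : Matrix n n R) (σ τ : m ⊕ l ≃ n) :
    (A.adjugate.submatrix (τ ∘ Sum.inl) (σ ∘ Sum.inl)).det =
      sign (τ.symm.trans σ) * A.det ^ (Fintype.card m - 1) *
        (A.submatrix (σ ∘ Sum.inr) (τ ∘ Sum.inr)).det := by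
  let X := mvPolynomialX n n ℤ
  suffices (X.adjugate.submatrix (τ ∘ Sum.inl) (σ ∘ Sum.inl)).det =
      sign (τ.symm.trans σ) * X.det ^ (Fintype.card m - 1) *
        (X.submatrix (σ ∘ Sum.inr) (τ ∘ Sum.inr)).det by
    have := congrArg (MvPolynomial.aeval fun p : n × n => A p.1 p.2) this
    rw [← mvPolynomialX_mapMatrix_aeval ℤ A, ← AlgHom.map_adjugate]
    simp only [map_mul, map_pow, map_intCast, AlgHom.map_det, AlgHom.mapMatrix_apply,
      submatrix_map] at this ⊢
    exact this
  have hs : ((sign (τ.symm.trans σ) : ℤ) : MvPolynomial (n × n) ℤ) ^ 2 = 1 := by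
    norm_cast
    rw [Int.units_sq]
    rfl
  refine mul_left_cancel₀ (show X.det ≠ 0 from det_mvPolynomialX_ne_zero n ℤ) ?_
  calc X.det * (X.adjugate.submatrix (τ ∘ Sum.inl) (σ ∘ Sum.inl)).det
      = sign (τ.symm.trans σ) * ((X.submatrix σ τ).det *
          (X.adjugate.submatrix (τ ∘ Sum.inl) (σ ∘ Sum.inl)).det) := by
        rw [det_submatrix_equiv_equiv, ← mul_assoc, ← mul_assoc, ← sq, hs, one_mul]
    _ = sign (τ.symm.trans σ) * (X.det ^ Fintype.card m *
          (X.submatrix (σ ∘ Sum.inr) (τ ∘ Sum.inr)).det) := by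
        rw [det_submatrix_mul_det_adjugate_submatrix]
    _ = _ := by
        rw [← mul_pow_sub_one Fintype.card_ne_zero]
        ring

end Matrix

/-- Jacobi's theorem on minors of the cofactor matrix: for an `n × n` matrix `A` and
index sets `I, J` of size `k ≥ 1`,
`det((A^C)_{I,J}) = (-1)^{∑I+∑J} det(A)^{k-1} det(A_{[n]∖I,[n]∖J})`,
where `A^C = (adjugate A)ᵀ` is the cofactor matrix (so `(A^C)_{ij} = adjugate A j i`). -/
theorem stmt14 (n k : ℕ) (hk : 1 ≤ k) (A : Matrix (Fin n) (Fin n) ℚ)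
    (I J : Finset (Fin n)) (hI : I.card = k) (hJ : J.card = k)
    (hIc : (Iᶜ).card = n - k) (hJc : (Jᶜ).card = n - k) :
    Matrix.det (Matrix.of fun p q : Fin k =>
        A.adjugate ((J.orderIsoOfFin hJ q : Fin n)) ((I.orderIsoOfFin hI p : Fin n)))
      = (-1 : ℚ) ^ ((∑ i ∈ I, (i : ℕ)) + ∑ j ∈ J, (j : ℕ)) *
          A.det ^ (k - 1) *
          Matrix.det (Matrix.of fun p q : Fin (n - k) =>
            A (((Iᶜ).orderIsoOfFin hIc p : Fin n)) (((Jᶜ).orderIsoOfFin hJc q : Fin n))) := by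
  have : Nonempty (Fin k) := ⟨⟨0, hk⟩⟩
  have h := det_adjugate_submatrix_inl A (finSumEquivOfFinset hI hIc) (finSumEquivOfFinset hJ hJc)
  rw [sign_symm_trans_finSumEquivOfFinset, Fintype.card_fin] at h
  rw [← det_transpose]
  convert h using 3
  · ext p q
    simp
  · simp
  · ext p q
    simp
end

section
/- Define LP_{(j)}(n) to be ψ_{{0,1,...,n-1}∖{j}} (the Lascoux coefficient of the complement of {j} in {0,...,n-1}) if j < n, and 0 otherwise. Then LP_{(j)}(n) = C(n, j+1) for all n ≥ 0. -/
open scoped BigOperators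

/-- The Lascoux coefficient `ψ_I` of a strictly increasing tuple `I : Fin r → ℕ`, via the
Pascal-minor formula `ψ_I = ∑_{J ≤ I} det(C(i_k, j_l))` (equivalent to the defining
expansion of `h_d({x_i+x_j})` in Schur polynomials). -/
def psi (r : ℕ) (I : Fin r → ℕ) : ℤ :=
  ∑ J ∈ (Fintype.piFinset fun _ : Fin r => Finset.range ((∑ k, I k) + 1)).filter
      (fun J => (∀ k l : Fin r, k < l → J k < J l) ∧ ∀ k, J k ≤ I k),
    Matrix.det (Matrix.of fun k l : Fin r => ((I k).choose (J l) : ℤ))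

/-- `ψ_I` for a finite set `I` of nonnegative integers. -/
def psiF (I : Finset ℕ) : ℤ :=
  psi I.card fun k => ((I.orderIsoOfFin rfl) k : ℕ)

/-!
For `I = {0, …, m} \ {j}`, a strictly increasing `J ≤ I` satisfies `k ≤ J k ≤ k + 1`, so
`J = {0, …, m} \ {t}` for some `j ≤ t ≤ m`. The matrix `(C(i_k, j_l))` is then the minor of the
Pascal matrix `(C(a, b))_{a, b ≤ m}` obtained by deleting row `j` and column `t`. The Pascal matrix
has determinant `1` and inverse `((-1)^(a+b) C(a, b))`, so by the adjugate formula this minor is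
`C(t, j)`. Hence `ψ_I = ∑_{t=j}^{m} C(t, j) = C(m+1, j+1)` by the hockey-stick identity.
-/

open Finset

theorem sum_range_choose_mul_neg_one_pow_mul_choose (i k : ℕ) :
    ∑ l ∈ range (i + 1), (i.choose l : ℤ) * ((-1) ^ (l + k) * l.choose k) =
      if i = k then 1 else 0 := by
  rcases lt_or_ge i k with hik | hki
  · rw [if_neg hik.ne]
    refine sum_eq_zero fun l hl => ?_
    rw [Nat.choose_eq_zero_of_lt (show l < k by grind)]
    simp
  obtain ⟨d, rfl⟩ := Nat.exists_eq_add_of_le hki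
  have hterm : ∀ e, ((k + d).choose (k + e) : ℤ) * ((-1) ^ (k + e + k) * (k + e).choose k) =
      (k + d).choose k * ((-1) ^ e * d.choose e) := by
    intro e
    have h := Nat.choose_mul (n := k + d) (Nat.le_add_right k e)
    rw [Nat.add_sub_cancel_left, Nat.add_sub_cancel_left] at h
    rw [show k + e + k = e + 2 * k by ring, pow_add, pow_mul, neg_one_sq, one_pow, mul_one,
      mul_left_comm, ← Nat.cast_mul, h]
    push_cast
    ring
  rw [show k + d + 1 = k + (d + 1) by ring, sum_range_add,
    sum_eq_zero fun l hl => by rw [Nat.choose_eq_zero_of_lt (mem_range.1 hl)]; simp,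
    zero_add]
  simp only [hterm, ← mul_sum, Int.alternating_sum_range_choose]
  by_cases hd : d = 0 <;> simp [hd]

section Pascal

variable (R : Type*) [CommRing R]

def pascal (n : ℕ) : Matrix (Fin n) (Fin n) R :=
  Matrix.of fun i k => ((i : ℕ).choose k : R)

theorem det_pascal (n : ℕ) : (pascal R n).det = 1 := by
  rw [Matrix.det_of_isLowerTriangular _ fun i k (h : i < k) => by
    simp [pascal, Nat.choose_eq_zero_of_lt (Fin.lt_def.1 h)]]
  simp [pascal]

theorem inv_pascal (n : ℕ) :
    (pascal R n)⁻¹ =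
      Matrix.of fun i k : Fin n => (-1) ^ ((i : ℕ) + k) * ((i : ℕ).choose k : R) := by
  refine Matrix.inv_eq_right_inv (Matrix.ext fun i k => ?_)
  have hsum := congrArg (Int.cast : ℤ → R) (sum_range_choose_mul_neg_one_pow_mul_choose i k)
  push_cast at hsum
  simp only [Matrix.mul_apply, Matrix.one_apply, Fin.ext_iff, ← hsum, pascal, Matrix.of_apply]
  rw [Fin.sum_univ_eq_sum_range (fun l => ((i : ℕ).choose l : R) * ((-1) ^ (l + k) * l.choose k))]
  refine (sum_subset (range_subset_range.2 i.isLt) fun l _ hl => ?_).symm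
  rw [Nat.choose_eq_zero_of_lt (by simpa using hl)]
  simp

theorem adjugate_pascal (n : ℕ) : (pascal R n).adjugate = (pascal R n)⁻¹ := by
  rw [Matrix.inv_def, det_pascal, Ring.inverse_one, one_smul]

theorem det_pascal_submatrix_succAbove {n : ℕ} (j t : Fin (n + 1)) :
    ((pascal R (n + 1)).submatrix j.succAbove t.succAbove).det = ((t : ℕ).choose j : R) := by
  have h := Matrix.adjugate_fin_succ_eq_det_submatrix (pascal R (n + 1)) t j
  rw [adjugate_pascal, inv_pascal, Matrix.of_apply, add_comm (t : ℕ)] at h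
  exact ((isUnit_neg_one.pow _).mul_left_cancel h).symm

end Pascal

def succAboveNat (t k : ℕ) : ℕ :=
  if k < t then k else k + 1

theorem Fin.val_succAbove {n : ℕ} (p : Fin (n + 1)) (k : Fin n) :
    (p.succAbove k : ℕ) = succAboveNat p k := by
  unfold succAboveNat
  split_ifs with h
  · rw [Fin.succAbove_of_castSucc_lt _ _ (Fin.lt_def.2 h), Fin.val_castSucc]
  · rw [Fin.succAbove_of_le_castSucc _ _ (Fin.le_def.2 (not_lt.1 h)), Fin.val_succ]

theorem succAboveNat_strictMono (t : ℕ) : StrictMono (succAboveNat t) := by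
  intro a b h
  unfold succAboveNat
  split_ifs <;> omega

theorem succAboveNat_le_succ (t k : ℕ) : succAboveNat t k ≤ k + 1 := by
  unfold succAboveNat
  split_ifs <;> omega

theorem antitone_succAboveNat (k : ℕ) : Antitone fun t => succAboveNat t k := by
  intro t t' h
  dsimp only [succAboveNat]
  split_ifs <;> omega

theorem succAboveNat_mem_erase_range {m t k : ℕ} (hk : k < m) :
    succAboveNat t k ∈ (range (m + 1)).erase t := by
  rw [mem_erase, mem_range]
  unfold succAboveNat
  split_ifs <;> omega

theorem card_erase_range {m t : ℕ} (ht : t ≤ m) : ((range (m + 1)).erase t).card = m := by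
  rw [card_erase_of_mem (mem_range.2 (Nat.lt_succ_of_le ht)), card_range, Nat.add_one_sub_one]

theorem eq_succAboveNat_of_mem_erase_range {m t : ℕ} (ht : t ≤ m) {f : Fin m → ℕ}
    (hf : StrictMono f) (hmem : ∀ k, f k ∈ (range (m + 1)).erase t) :
    f = fun k : Fin m => succAboveNat t k :=
  (orderEmbOfFin_unique (card_erase_range ht) hmem hf).trans
    (orderEmbOfFin_unique (card_erase_range ht) (fun k => succAboveNat_mem_erase_range k.isLt)
      ((succAboveNat_strictMono t).comp Fin.val_strictMono)).symm

theorem succAboveNat_tuple_injOn (m : ℕ) :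
    Set.InjOn (fun t (k : Fin m) => succAboveNat t k) (Set.Iic m) := by
  have hne : ∀ t t', t < t' → t' ≤ m →
      (fun k : Fin m => succAboveNat t k) ≠ fun k : Fin m => succAboveNat t' k :=
      fun t t' h ht' he => by
    have := congrFun he ⟨t, by omega⟩
    simp only [succAboveNat, lt_irrefl, if_false, h, if_true] at this
    omega
  intro t ht t' ht' h
  rcases lt_trichotomy t t' with hlt | rfl | hgt
  · exact absurd h (hne t t' hlt ht')
  · rfl
  · exact absurd h.symm (hne t' t hgt ht)

theorem exists_eq_succAboveNat_of_strictMono_of_le {m j : ℕ} (hj : j ≤ m) {J : Fin m → ℕ}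
    (hJ : StrictMono J) (hle : ∀ k, J k ≤ succAboveNat j k) :
    ∃ t ∈ Icc j m, J = fun k : Fin m => succAboveNat t k := by
  have hrange : ∀ k, J k ∈ range (m + 1) := fun k =>
    mem_range.2 (by have := succAboveNat_le_succ j k; have := hle k; omega)
  obtain ⟨t, ht, htJ⟩ : ∃ t ∈ range (m + 1), t ∉ univ.image J :=
    exists_mem_notMem_of_card_lt_card (by
      rw [card_image_of_injective _ hJ.injective, card_univ, Fintype.card_fin, card_range]
      exact Nat.lt_succ_self m)
  have htm : t ≤ m := Nat.lt_succ_iff.1 (mem_range.1 ht)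
  have hJt : J = fun k : Fin m => succAboveNat t k := eq_succAboveNat_of_mem_erase_range htm hJ
    fun k => mem_erase.2 ⟨fun h => htJ (mem_image.2 ⟨k, mem_univ k, h⟩), hrange k⟩
  refine ⟨t, mem_Icc.2 ⟨not_lt.1 fun htj => ?_, htm⟩, hJt⟩
  have := hle ⟨t, by omega⟩
  simp only [hJt, succAboveNat, lt_irrefl, if_false, htj, if_true] at this
  omega

theorem det_choose_succAboveNat {m j t : ℕ} (hj : j ≤ m) (ht : t ≤ m) :
    (Matrix.of fun k l : Fin m => ((succAboveNat j k).choose (succAboveNat t l) : ℤ)).det =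
      t.choose j := by
  have h := det_pascal_submatrix_succAbove ℤ (⟨j, Nat.lt_succ_of_le hj⟩ : Fin (m + 1))
    ⟨t, Nat.lt_succ_of_le ht⟩
  simpa [pascal, Matrix.submatrix, Fin.val_succAbove] using h

theorem psi_succAboveNat {m j : ℕ} (hj : j ≤ m) :
    psi m (fun k : Fin m => succAboveNat j k) = ((m + 1).choose (j + 1) : ℤ) := by
  have hJ : ((Fintype.piFinset fun _ : Fin m => range ((∑ k : Fin m, succAboveNat j k) + 1)).filter
      fun J => (∀ k l : Fin m, k < l → J k < J l) ∧ ∀ k : Fin m, J k ≤ succAboveNat j k) =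
      (Icc j m).image fun t (k : Fin m) => succAboveNat t k := by
    ext J
    simp only [mem_filter, Fintype.mem_piFinset, mem_range, mem_image]
    constructor
    · rintro ⟨-, hmono, hle⟩
      obtain ⟨t, ht, rfl⟩ := exists_eq_succAboveNat_of_strictMono_of_le hj hmono hle
      exact ⟨t, ht, rfl⟩
    · rintro ⟨t, ht, rfl⟩
      have hle : ∀ k : Fin m, succAboveNat t k ≤ succAboveNat j k :=
        fun k => antitone_succAboveNat k (mem_Icc.1 ht).1
      refine ⟨fun k => Nat.lt_succ_of_le ((hle k).trans ?_),
        (succAboveNat_strictMono t).comp Fin.val_strictMono, hle⟩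
      exact single_le_sum (f := fun k : Fin m => succAboveNat j k) (fun _ _ => Nat.zero_le _)
        (mem_univ k)
  unfold psi
  rw [hJ, sum_image ((succAboveNat_tuple_injOn m).mono fun t ht => (mem_Icc.1 ht).2),
    sum_congr rfl fun t ht => det_choose_succAboveNat hj (mem_Icc.1 ht).2, ← Nat.cast_sum,
    Nat.sum_Icc_choose]

theorem psiF_eq_psi (I : Finset ℕ) {r : ℕ} (h : I.card = r) :
    psiF I = psi r fun k => I.orderEmbOfFin h k := by
  subst h
  rfl

/-- `LP_{(j)}(n) = ψ_{{0,…,n-1}∖{j}}` (and `0` for `j ≥ n`) equals `C(n, j+1)`. -/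
theorem stmt16 (n j : ℕ) :
    (if j < n then psiF ((Finset.range n).erase j) else 0) = (n.choose (j + 1) : ℤ) := by
  split_ifs with hjn
  · obtain ⟨m, rfl⟩ : ∃ m, n = m + 1 := Nat.exists_eq_add_one_of_ne_zero (by omega)
    have hj : j ≤ m := Nat.lt_succ_iff.1 hjn
    rw [psiF_eq_psi _ (card_erase_range hj), ← psi_succAboveNat hj]
    congr 1
    exact eq_succAboveNat_of_mem_erase_range hj (orderEmbOfFin _ _).strictMono
      (orderEmbOfFin_mem _ _)
  · rw [Nat.choose_eq_zero_of_lt (by omega), Nat.cast_zero]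
end
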